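/- arXiv:2004.08528 — 4 statements merged into one kernel-verified Lean document; each statement's English description precedes it below -/
import Mathlib

section
/- Every finite simple graph with minimum degree at least 3 contains a subdivision of the complete graph K_4. -/
open SimpleGraph

/-- `G` contains a subdivision of `H`: there are branch vertices (an injection of `V(H)`
into `V(G)`) and internally disjoint paths in `G` corresponding to the edges of `H`. -/
def SimpleGraph.ContainsSubdivision {α β : Type*} (G : SimpleGraph α) (H : SimpleGraph β) :
    Prop :=
  ∃ (f : β ↪ α) (p : ∀ ⦃u v : β⦄, H.Adj u v → G.Walk (f u) (f v)),
    (∀ ⦃u v : β⦄ (h : H.Adj u v), (p h).IsPath) ∧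
    (∀ ⦃u v : β⦄ (h : H.Adj u v) (x : β), f x ∈ (p h).support → x = u ∨ x = v) ∧
    (∀ ⦃u v u' v' : β⦄ (h : H.Adj u v) (h' : H.Adj u' v'),
      s(u, v) ≠ s(u', v') → ∀ x, x ∈ (p h).support → x ∈ (p h').support →
        (x = f u ∨ x = f v) ∧ (x = f u' ∨ x = f v'))

/-!
Induction on the number of edges, for the larger class of graphs `G ≠ ⊥` in which at most one
vertex has degree 1 or 2. If a vertex `v` of degree at most 3 has two non-adjacent neighbours `x`,
`y`, delete the edges at `v` and add `xy`: only the third neighbour of `v` can become low, and a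
`K₄`-subdivision of the new graph gives one of `G` by routing `xy` through `v`. This applies to a
low vertex of degree 2 with non-adjacent neighbours, and to every vertex once all non-isolated
vertices have degree 3. The other configurations (a low vertex of degree 1 or in a triangle, a
vertex of degree at least 4) are removed by deleting a few edges, in one case followed by such a
suppression, again leaving at most one low vertex. If nothing applies, some vertex of degree 3 has
a complete neighbourhood, and these four vertices span a `K₄`.
-/

namespace Set

variable {α : Type*} [Finite α]

lemma ncard_insert_sdiff_singleton {s : Set α} {a b : α} (ha : a ∈ s) (hb : b ∉ s) :
    (insert b (s \ {a})).ncard = s.ncard := by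
  rw [ncard_insert_of_notMem (fun h => hb h.1), ncard_sdiff_singleton_add_one ha]

lemma exists_eq_insert_insert_singleton {s : Set α} {a b : α} (hs : s.ncard = 3) (ha : a ∈ s)
    (hb : b ∈ s) (hab : a ≠ b) : ∃ c, c ≠ a ∧ c ≠ b ∧ s = {a, b, c} := by
  have hpair : ({a, b} : Set α) ⊆ s := insert_subset ha (by simpa using hb)
  obtain ⟨c, hc⟩ : ∃ c, s \ {a, b} = {c} := by
    rw [← ncard_eq_one, ncard_sdiff hpair, hs, ncard_pair hab]
  have hcs : c ∈ s \ {a, b} := hc ▸ rfl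
  simp only [mem_sdiff, mem_insert_iff, mem_singleton_iff, not_or] at hcs
  refine ⟨c, hcs.2.1, hcs.2.2, ?_⟩
  rw [← union_sdiff_cancel hpair, hc]
  ext
  simp only [mem_union, mem_insert_iff, mem_singleton_iff]
  tauto

end Set

namespace SimpleGraph

variable {V : Type*} {G G' : SimpleGraph V}

lemma Walk.notMem_support_of_forall_not_adj {u v c : V} {p : G.Walk u v} (hp : ¬ p.Nil)
    (hc : ∀ w, ¬ G.Adj c w) : c ∉ p.support := by
  intro h
  obtain ⟨e, he, hce⟩ := (Walk.mem_support_iff_exists_mem_edges_of_not_nil hp).mp h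
  induction e using Sym2.ind with
  | _ a b =>
    rcases Sym2.mem_iff.mp hce with rfl | rfl
    · exact hc b (p.adj_of_mem_edges he)
    · exact hc a (p.adj_of_mem_edges he).symm

lemma Walk.exists_isPath_of_le_sup_edge {x y c : V} (hle : G' ≤ G ⊔ edge x y)
    (hxc : G.Adj x c) (hcy : G.Adj c y) {u v : V} (p : G'.Walk u v) (hp : p.IsPath)
    (hcp : c ∉ p.support) :
    ∃ q : G.Walk u v, q.IsPath ∧
      ∀ z ∈ q.support, z ∈ p.support ∨ (z = c ∧ s(x, y) ∈ p.edges) := by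
  induction p with
  | nil => exact ⟨.nil, .nil, by simp⟩
  | @cons u b v h p ih =>
    rw [Walk.cons_isPath_iff] at hp
    rw [Walk.support_cons, List.mem_cons, not_or] at hcp
    obtain ⟨q, hq, hqp⟩ := ih hp.1 hcp.2
    rcases hle h with hG | hxy
    · refine ⟨.cons hG q, (Walk.cons_isPath_iff _ _).mpr ⟨hq, fun hu => ?_⟩, ?_⟩
      · rcases hqp u hu with hu | ⟨rfl, -⟩
        exacts [hp.2 hu, hcp.1 rfl]
      · simp only [Walk.support_cons, List.mem_cons, Walk.edges_cons]
        rintro z (rfl | hz)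
        · exact .inl (.inl rfl)
        · rcases hqp z hz with hz | ⟨rfl, he⟩
          exacts [.inl (.inr hz), .inr ⟨rfl, .inr he⟩]
    · have hxy' : s(u, b) = s(x, y) := ((adj_edge ..).mp hxy).1.symm
      have hpe : s(x, y) ∉ p.edges := fun he =>
        hp.2 (p.fst_mem_support_of_mem_edges (hxy' ▸ he))
      have hqp' : ∀ z ∈ q.support, z ∈ p.support := fun z hz =>
        (hqp z hz).resolve_right fun h => hpe h.2
      obtain ⟨huc, hcb⟩ : G.Adj u c ∧ G.Adj c b := by
        rcases Sym2.eq_iff.mp hxy' with ⟨rfl, rfl⟩ | ⟨rfl, rfl⟩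
        exacts [⟨hxc, hcy⟩, ⟨hcy.symm, hxc.symm⟩]
      refine ⟨.cons huc (.cons hcb q), ?_, ?_⟩
      · simp only [Walk.cons_isPath_iff, Walk.support_cons, List.mem_cons, not_or]
        exact ⟨⟨hq, fun hc => hcp.2 (hqp' c hc)⟩, fun h => hcp.1 h.symm,
          fun hu => hp.2 (hqp' u hu)⟩
      · simp only [Walk.support_cons, List.mem_cons, Walk.edges_cons, hxy']
        rintro z (rfl | rfl | hz)
        · exact .inl (.inl rfl)
        · exact .inr ⟨rfl, by simp⟩
        · exact .inl (.inr (hqp' z hz))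

lemma ContainsSubdivision.mono {β : Type*} {H : SimpleGraph β} (hle : G' ≤ G)
    (h : G'.ContainsSubdivision H) : G.ContainsSubdivision H := by
  obtain ⟨f, p, hpath, hbranch, hdisj⟩ := h
  have hE : ∀ ⦃u v⦄ (h : H.Adj u v), ∀ e ∈ (p h).edges, e ∈ G.edgeSet :=
    fun _ _ h _ he => edgeSet_mono hle ((p h).edges_subset_edgeSet he)
  refine ⟨f, fun u v h => (p h).transfer G (hE h), fun u v h => (hpath h).transfer (hE h),
    fun u v h x hx => ?_, fun u v u' v' h h' hne x hx hx' => ?_⟩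
  · exact hbranch h x (by rwa [Walk.support_transfer] at hx)
  · rw [Walk.support_transfer] at hx hx'
    exact hdisj h h' hne x hx hx'

lemma ContainsSubdivision.of_isContained {β : Type*} {H : SimpleGraph β} (h : H ⊑ G) :
    G.ContainsSubdivision H := by
  obtain ⟨f⟩ := h
  refine ⟨⟨f, f.injective⟩, fun u v h => (f.toHom.map_adj h).toWalk, fun u v h => ?_,
    fun u v h x hx => ?_, fun u v u' v' h h' hne x hx hx' => ?_⟩
  · simpa using (f.toHom.map_adj h).ne
  · simp only [Adj.toWalk, Walk.support_cons, Walk.support_nil, List.mem_cons,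
      List.not_mem_nil, or_false] at hx
    exact hx.imp (fun h => f.injective h) (fun h => f.injective h)
  · simp only [Adj.toWalk, Walk.support_cons, Walk.support_nil, List.mem_cons,
      List.not_mem_nil, or_false] at hx hx'
    exact ⟨hx, hx'⟩

lemma ContainsSubdivision.of_le_sup_edge {β : Type*} {H : SimpleGraph β}
    (hH : ∀ a, ∃ b, H.Adj a b) {x y c : V} (hle : G' ≤ G ⊔ edge x y) (hxc : G.Adj x c)
    (hcy : G.Adj c y) (hc : ∀ w, ¬ G'.Adj c w) (h : G'.ContainsSubdivision H) :
    G.ContainsSubdivision H := by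
  obtain ⟨f, p, hpath, hbranch, hdisj⟩ := h
  have hcp : ∀ ⦃u v⦄ (h : H.Adj u v), c ∉ (p h).support := fun u v h =>
    Walk.notMem_support_of_forall_not_adj (fun hn => h.ne (f.injective hn.eq)) hc
  choose q hq hqp using fun u v (h : H.Adj u v) =>
    Walk.exists_isPath_of_le_sup_edge hle hxc hcy (p h) (hpath h) (hcp h)
  refine ⟨f, fun u v h => q u v h, fun u v h => hq u v h, fun u v h a ha => ?_,
    fun u v u' v' h h' hne z hz hz' => ?_⟩
  · refine (hqp u v h _ ha).elim (hbranch h a) fun ⟨hac, _⟩ => ?_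
    obtain ⟨b, hab⟩ := hH a
    exact absurd (hac ▸ (p hab).start_mem_support) (hcp hab)
  · rcases hqp u v h z hz with hz | ⟨rfl, he⟩ <;>
      rcases hqp u' v' h' z hz' with hz' | ⟨hz'c, he'⟩
    · exact hdisj h h' hne z hz hz'
    · exact absurd (hz'c ▸ hz) (hcp h)
    · exact absurd hz' (hcp h')
    · -- both paths contain the edge `xy`, so its ends are branch vertices of both
      have hxy : x ≠ y := ((p h).adj_of_mem_edges he).ne
      have hends : ∀ ⦃u v⦄ (h : H.Adj u v) ⦃u' v'⦄ (h' : H.Adj u' v'),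
          s(u, v) ≠ s(u', v') →
          s(x, y) ∈ (p h).edges → s(x, y) ∈ (p h').edges → s(f u, f v) = s(x, y) :=
        fun u v h u' v' h' hne he he' => (Sym2.mem_and_mem_iff hxy).mp
          ⟨Sym2.mem_iff.mpr (hdisj h h' hne x ((p h).fst_mem_support_of_mem_edges he)
              ((p h').fst_mem_support_of_mem_edges he')).1,
            Sym2.mem_iff.mpr (hdisj h h' hne y ((p h).snd_mem_support_of_mem_edges he)
              ((p h').snd_mem_support_of_mem_edges he')).1⟩
      refine absurd (Sym2.map.injective f.injective ?_) hne
      simp only [Sym2.map_mk]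
      rw [hends h h' hne he he', hends h' h (Ne.symm hne) he' he]

lemma completeGraph_fin_four_exists_adj (a : Fin 4) : ∃ b, (completeGraph (Fin 4)).Adj a b :=
  ⟨a + 1, by fin_cases a <;> decide⟩

lemma neighborSet_deleteIncidenceSet_self (G : SimpleGraph V) (v : V) :
    (G.deleteIncidenceSet v).neighborSet v = ∅ := by
  ext; simp [deleteIncidenceSet_adj]

lemma neighborSet_deleteIncidenceSet_of_ne {v z : V} (h : z ≠ v) :
    (G.deleteIncidenceSet v).neighborSet z = G.neighborSet z \ {v} := by
  ext; simp [deleteIncidenceSet_adj, h]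

lemma neighborSet_deleteIncidenceSet_of_not_adj {v z : V} (h : z ≠ v) (hzv : ¬ G.Adj z v) :
    (G.deleteIncidenceSet v).neighborSet z = G.neighborSet z := by
  rw [neighborSet_deleteIncidenceSet_of_ne h,
    Set.sdiff_singleton_eq_self (s := G.neighborSet z) hzv]

lemma neighborSet_sup_edge_of_ne {a b z : V} (ha : z ≠ a) (hb : z ≠ b) :
    (G ⊔ edge a b).neighborSet z = G.neighborSet z := by
  ext; simp [edge_adj, ha, hb]

lemma neighborSet_sup_edge_left {a b : V} (hab : a ≠ b) :
    (G ⊔ edge a b).neighborSet a = insert b (G.neighborSet a) := by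
  ext w
  simp only [mem_neighborSet, sup_adj, edge_adj, Set.mem_insert_iff]
  grind

lemma neighborSet_sup_edge_right {a b : V} (hab : a ≠ b) :
    (G ⊔ edge a b).neighborSet b = insert a (G.neighborSet b) := by
  rw [edge_comm, neighborSet_sup_edge_left hab.symm]

/-- Isolated vertices are not low: the induction isolates vertices instead of deleting them. -/
def IsLow (G : SimpleGraph V) (v : V) : Prop := (G.neighborSet v).ncard ∈ Set.Icc 1 2

def IsReduction (G' G : SimpleGraph V) : Prop :=
  G'.edgeSet.ncard < G.edgeSet.ncard ∧ G' ≠ ⊥ ∧ {v | G'.IsLow v}.Subsingleton ∧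
    (G'.ContainsSubdivision (completeGraph (Fin 4)) →
      G.ContainsSubdivision (completeGraph (Fin 4)))

lemma not_isLow_of_ncard_eq {v w : V} (h : (G'.neighborSet w).ncard = (G.neighborSet v).ncard)
    (hv : ¬ G.IsLow v) : ¬ G'.IsLow w := by
  rwa [IsLow, h]

lemma not_isLow_of_three_le {v : V} (h : 3 ≤ (G.neighborSet v).ncard) : ¬ G.IsLow v := by
  simp only [IsLow, Set.mem_Icc, not_and_or, not_le]
  omega

lemma not_isLow_of_neighborSet_eq_empty {v : V} (h : G.neighborSet v = ∅) : ¬ G.IsLow v := by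
  simp [IsLow, h]

lemma setOf_isLow_subset {S T : Set V} (hlow : {z | G.IsLow z} ⊆ S)
    (hS : ∀ z ∉ S, G'.neighborSet z = G.neighborSet z)
    (hT : ∀ z ∈ S, G'.IsLow z → z ∈ T) :
    {z | G'.IsLow z} ⊆ T := by
  intro z hz
  by_cases hzS : z ∈ S
  · exact hT z hzS hz
  · exact absurd (hlow (show G.IsLow z by rwa [IsLow, ← hS z hzS])) hzS

section Finite

variable [Finite V]

lemma ncard_edgeSet_lt_of_le {a b : V} (hle : G' ≤ G) (h : G.Adj a b) (h' : ¬ G'.Adj a b) :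
    G'.edgeSet.ncard < G.edgeSet.ncard :=
  Set.ncard_lt_ncard ⟨edgeSet_mono hle, fun hs => h' (hs (G.mem_edgeSet.mpr h))⟩

lemma ncard_edgeSet_lt_of_le_sup_edge {a b : V} {e e' : Sym2 V} (hle : G' ≤ G ⊔ edge a b)
    (he : e ∈ G.edgeSet \ G'.edgeSet) (he' : e' ∈ G.edgeSet \ G'.edgeSet) (hne : e ≠ e') :
    G'.edgeSet.ncard < G.edgeSet.ncard := by
  have hsub : G'.edgeSet ⊆ insert s(a, b) (G.edgeSet \ {e, e'}) := by
    intro d hd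
    rcases (edgeSet_sup G (edge a b) ▸ edgeSet_mono hle hd : d ∈ G.edgeSet ∪ _) with hd' | hd'
    · refine .inr ⟨hd', ?_⟩
      rintro (rfl | rfl)
      exacts [he.2 hd, he'.2 hd]
    · exact .inl (edgeSet_edge_subset hd')
  have hpair : ({e, e'} : Set (Sym2 V)) ⊆ G.edgeSet :=
    Set.insert_subset he.1 (by simpa using he'.1)
  calc G'.edgeSet.ncard ≤ (insert s(a, b) (G.edgeSet \ {e, e'})).ncard := Set.ncard_le_ncard hsub
    _ ≤ (G.edgeSet \ {e, e'}).ncard + 1 := Set.ncard_insert_le _ _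
    _ < G.edgeSet.ncard := by
      rw [Set.ncard_sdiff hpair, Set.ncard_pair hne]
      have := Set.ncard_le_ncard hpair
      rw [Set.ncard_pair hne] at this
      omega

lemma three_le_ncard_neighborSet_of_not_isLow {v w : V} (h : ¬ G.IsLow v) (hvw : G.Adj v w) :
    3 ≤ (G.neighborSet v).ncard := by
  have : 0 < (G.neighborSet v).ncard := (Set.ncard_pos).mpr ⟨w, hvw⟩
  simp only [IsLow, Set.mem_Icc, not_and_or, not_le] at h
  omega

lemma IsReduction.of_le {a b : V} (hle : G' ≤ G) (hab : G.Adj a b) (hab' : ¬ G'.Adj a b)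
    (hE : G' ≠ ⊥) (hlow : {z | G'.IsLow z}.Subsingleton) : IsReduction G' G :=
  ⟨ncard_edgeSet_lt_of_le hle hab hab', hE, hlow, (·.mono hle)⟩

lemma IsReduction.of_le_sup_edge {x y c : V} (hle : G' ≤ G ⊔ edge x y) (hxc : G.Adj x c)
    (hcy : G.Adj c y) (hc : ∀ w, ¬ G'.Adj c w) (hxy : G'.Adj x y)
    (hlow : {z | G'.IsLow z}.Subsingleton) : IsReduction G' G := by
  refine ⟨ncard_edgeSet_lt_of_le_sup_edge hle (e := s(x, c)) (e' := s(c, y))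
    ⟨hxc, fun h => hc x (G'.adj_symm h)⟩ ⟨hcy, hc y⟩ ?_,
    ne_bot_iff_exists_adj.mpr ⟨x, y, hxy⟩, hlow,
    (·.of_le_sup_edge completeGraph_fin_four_exists_adj hle hxc hcy hc)⟩
  rw [Ne, Sym2.eq_iff]
  rintro (⟨rfl, -⟩ | ⟨rfl, -⟩)
  exacts [G.irrefl hxc, hxy.ne rfl]

lemma exists_isReduction_of_not_adj {v x y : V} (hlow : {z | G.IsLow z} ⊆ {v})
    (hv : (G.neighborSet v).ncard ≤ 3) (hx : G.Adj v x) (hy : G.Adj v y) (hxy : x ≠ y)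
    (hnxy : ¬ G.Adj x y) : ∃ G', IsReduction G' G := by
  set G' := G.deleteIncidenceSet v ⊔ edge x y
  have hG'v : G'.neighborSet v = ∅ := by
    rw [neighborSet_sup_edge_of_ne hx.ne hy.ne, neighborSet_deleteIncidenceSet_self]
  have hG'x : (G'.neighborSet x).ncard = (G.neighborSet x).ncard := by
    rw [neighborSet_sup_edge_left hxy, neighborSet_deleteIncidenceSet_of_ne hx.ne',
      Set.ncard_insert_sdiff_singleton (G.mem_neighborSet x v |>.mpr hx.symm) hnxy]
  have hG'y : (G'.neighborSet y).ncard = (G.neighborSet y).ncard := by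
    rw [neighborSet_sup_edge_right hxy, neighborSet_deleteIncidenceSet_of_ne hy.ne',
      Set.ncard_insert_sdiff_singleton (G.mem_neighborSet y v |>.mpr hy.symm)
        (fun h => hnxy (G.adj_symm h))]
  have hvxy : ({x, y} : Set V) ⊆ G.neighborSet v := Set.insert_subset hx (by simpa using hy)
  refine ⟨G', .of_le_sup_edge (sup_le_sup_right (G.deleteIncidenceSet_le v) _) hx.symm hy
    (Set.eq_empty_iff_forall_notMem.mp hG'v)
    (.inr ((edge_adj ..).mpr ⟨.inl ⟨rfl, rfl⟩, hxy⟩))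
    (Set.Subsingleton.anti ?_ (setOf_isLow_subset (S := insert v (G.neighborSet v))
      (T := G.neighborSet v \ {x, y}) (hlow.trans (by simp)) ?_ ?_))⟩
  · rw [← Set.ncard_le_one_iff_subsingleton, Set.ncard_sdiff hvxy, Set.ncard_pair hxy]
    omega
  · intro z hz
    simp only [Set.mem_insert_iff, mem_neighborSet, not_or] at hz
    rw [neighborSet_sup_edge_of_ne (by rintro rfl; exact hz.2 hx) (by rintro rfl; exact hz.2 hy),
      neighborSet_deleteIncidenceSet_of_not_adj hz.1 (fun h => hz.2 h.symm)]
  · rintro z (rfl | hz) hzlow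
    · exact absurd hzlow (not_isLow_of_neighborSet_eq_empty hG'v)
    · refine ⟨hz, ?_⟩
      rintro (rfl | rfl)
      · exact not_isLow_of_ncard_eq hG'x (fun h => hx.ne (hlow h).symm) hzlow
      · exact not_isLow_of_ncard_eq hG'y (fun h => hy.ne (hlow h).symm) hzlow

lemma exists_isReduction_of_ncard_eq_one {v : V} (hlow : {z | G.IsLow z} ⊆ {v})
    (hv : (G.neighborSet v).ncard = 1) : ∃ G', IsReduction G' G := by
  obtain ⟨x, hvx'⟩ := Set.ncard_eq_one.mp hv
  have hvx : G.Adj v x := by rw [← mem_neighborSet, hvx']; rfl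
  have hx : 3 ≤ (G.neighborSet x).ncard :=
    three_le_ncard_neighborSet_of_not_isLow (fun h => hvx.ne' (hlow h)) hvx.symm
  obtain ⟨w, hxw, hwv⟩ :=
    Set.exists_ne_of_one_lt_ncard (by omega : 1 < (G.neighborSet x).ncard) v
  refine ⟨G.deleteIncidenceSet v, .of_le (G.deleteIncidenceSet_le v) hvx
    (by simp [deleteIncidenceSet_adj])
    (ne_bot_iff_exists_adj.mpr ⟨x, w, deleteIncidenceSet_adj.mpr ⟨hxw, hvx.ne', hwv⟩⟩)
    (Set.subsingleton_singleton.anti (setOf_isLow_subset (S := {v, x}) (T := {x})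
      (hlow.trans (by simp)) (fun z hz => ?_) ?_))⟩
  · simp only [Set.mem_insert_iff, Set.mem_singleton_iff, not_or] at hz
    refine neighborSet_deleteIncidenceSet_of_not_adj hz.1 fun hzv => hz.2 ?_
    have : z ∈ G.neighborSet v := hzv.symm
    rwa [hvx'] at this
  · rintro z (rfl | rfl) hz
    · exact absurd hz (not_isLow_of_neighborSet_eq_empty (neighborSet_deleteIncidenceSet_self G _))
    · rfl

lemma exists_isReduction_of_triangle_of_four_le {v x y : V} (hlow : {z | G.IsLow z} ⊆ {v})
    (hv : G.neighborSet v = {x, y}) (hxy : G.Adj x y) (hx : 4 ≤ (G.neighborSet x).ncard) :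
    ∃ G', IsReduction G' G := by
  obtain ⟨hvx, hvy⟩ : G.Adj v x ∧ G.Adj v y := by simp [← mem_neighborSet, hv]
  refine ⟨G.deleteIncidenceSet v, .of_le (G.deleteIncidenceSet_le v) hvx
    (by simp [deleteIncidenceSet_adj])
    (ne_bot_iff_exists_adj.mpr ⟨x, y, deleteIncidenceSet_adj.mpr ⟨hxy, hvx.ne', hvy.ne'⟩⟩)
    (Set.subsingleton_singleton.anti (setOf_isLow_subset (S := {v, x, y}) (T := {y})
      (hlow.trans (by simp)) (fun z hz => ?_) ?_))⟩
  · simp only [Set.mem_insert_iff, Set.mem_singleton_iff, not_or] at hz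
    refine neighborSet_deleteIncidenceSet_of_not_adj hz.1 fun hzv => ?_
    have : z ∈ G.neighborSet v := hzv.symm
    simp [hv, hz.2.1, hz.2.2] at this
  · rintro z (rfl | rfl | rfl) hz
    · exact absurd hz (not_isLow_of_neighborSet_eq_empty (neighborSet_deleteIncidenceSet_self G _))
    · refine absurd hz (not_isLow_of_three_le ?_)
      rw [neighborSet_deleteIncidenceSet_of_ne hvx.ne',
        Set.ncard_sdiff_singleton_of_mem (G.mem_neighborSet _ _ |>.mpr hvx.symm)]
      omega
    · rfl

lemma exists_isReduction_of_diamond {v x y p : V} (hlow : {z | G.IsLow z} ⊆ {v})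
    (hv : G.neighborSet v = {x, y}) (hx : G.neighborSet x = {v, y, p})
    (hy : G.neighborSet y = {v, x, p}) (hpv : p ≠ v) : ∃ G', IsReduction G' G := by
  have hv' : ∀ z, G.Adj v z ↔ z = x ∨ z = y := fun z => by rw [← mem_neighborSet, hv]; simp
  have hx' : ∀ z, G.Adj x z ↔ z = v ∨ z = y ∨ z = p := fun z => by
    rw [← mem_neighborSet, hx]; simp
  have hy' : ∀ z, G.Adj y z ↔ z = v ∨ z = x ∨ z = p := fun z => by
    rw [← mem_neighborSet, hy]; simp
  obtain ⟨hvx, hxy, hxp, hyp⟩ : G.Adj v x ∧ G.Adj x y ∧ G.Adj x p ∧ G.Adj y p := by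
    simp [hv', hx', hy']
  obtain ⟨w, hpw, hwxy⟩ : ((G.neighborSet p) \ {x, y}).Nonempty := by
    have := three_le_ncard_neighborSet_of_not_isLow (fun h => hpv (hlow h)) hxp.symm
    rw [← Set.ncard_pos, Set.ncard_sdiff (show ({x, y} : Set V) ⊆ G.neighborSet p from
      Set.insert_subset hxp.symm (by simpa using hyp.symm)), Set.ncard_pair hxy.ne]
    omega
  simp only [Set.mem_insert_iff, Set.mem_singleton_iff, not_or] at hwxy
  have hwv : w ≠ v := by
    rintro rfl
    rcases (hv' p).mp hpw.symm with rfl | rfl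
    exacts [hxp.ne rfl, hyp.ne rfl]
  set G' := ((G.deleteIncidenceSet v).deleteIncidenceSet x).deleteIncidenceSet y
  have hiso : ∀ z, z = v ∨ z = x ∨ z = y → G'.neighborSet z = ∅ := by
    rintro z (rfl | rfl | rfl) <;> ext <;> simp [G', deleteIncidenceSet_adj]
  refine ⟨G', .of_le ((deleteIncidenceSet_le _ _).trans ((deleteIncidenceSet_le _ _).trans
    (deleteIncidenceSet_le _ _))) hvx (by simp [G', deleteIncidenceSet_adj])
    (ne_bot_iff_exists_adj.mpr ⟨p, w, by simp [G', deleteIncidenceSet_adj,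
      show G.Adj p w from hpw, hpv, hxp.ne', hyp.ne', hwv, hwxy.1, hwxy.2]⟩)
    (Set.subsingleton_singleton.anti (setOf_isLow_subset (S := {v, x, y, p}) (T := {p})
      (hlow.trans (by simp)) (fun z hz => ?_) ?_))⟩
  · simp only [Set.mem_insert_iff, Set.mem_singleton_iff, not_or] at hz
    obtain ⟨hzv, hzx, hzy, hzp⟩ := hz
    have hz : ∀ w, G.Adj z w → w ≠ v ∧ w ≠ x ∧ w ≠ y := by
      rintro w h
      refine ⟨?_, ?_, ?_⟩ <;> rintro rfl
      · rcases (hv' z).mp h.symm with rfl | rfl <;> contradiction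
      · rcases (hx' z).mp h.symm with rfl | rfl | rfl <;> contradiction
      · rcases (hy' z).mp h.symm with rfl | rfl | rfl <;> contradiction
    ext w
    simp only [G', mem_neighborSet, deleteIncidenceSet_adj]
    exact ⟨fun h => h.1.1.1,
      fun h => ⟨⟨⟨h, hzv, (hz w h).1⟩, hzx, (hz w h).2.1⟩, hzy, (hz w h).2.2⟩⟩
  · rintro z hzS hz
    simp only [Set.mem_insert_iff, Set.mem_singleton_iff] at hzS
    rcases hzS with hzS | hzS | hzS | rfl
    iterate 3 exact absurd hz (not_isLow_of_neighborSet_eq_empty (hiso z (by tauto)))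
    rfl

lemma exists_isReduction_of_triangle_of_not_adj {v x y p : V} (hlow : {z | G.IsLow z} ⊆ {v})
    (hv : G.neighborSet v = {x, y}) (hx : G.neighborSet x = {v, y, p}) (hpv : p ≠ v)
    (hpy : p ≠ y) (hnpy : ¬ G.Adj p y) : ∃ G', IsReduction G' G := by
  have hv' : ∀ z, G.Adj v z ↔ z = x ∨ z = y := fun z => by rw [← mem_neighborSet, hv]; simp
  have hx' : ∀ z, G.Adj x z ↔ z = v ∨ z = y ∨ z = p := fun z => by
    rw [← mem_neighborSet, hx]; simp
  obtain ⟨hvx, hvy, hxy, hxp⟩ : G.Adj v x ∧ G.Adj v y ∧ G.Adj x y ∧ G.Adj x p := by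
    simp [hv', hx']
  have hpnv : ¬ G.Adj p v := fun h => by
    rcases (hv' p).mp h.symm with rfl | rfl
    exacts [hxp.ne rfl, hpy rfl]
  set G' := (G.deleteIncidenceSet v).deleteIncidenceSet x ⊔ edge p y
  have hG'x : ∀ w, ¬ G'.Adj x w := by
    simp [G', deleteIncidenceSet_adj, edge_adj, hxp.ne, hxy.ne]
  refine ⟨G', .of_le_sup_edge (sup_le_sup_right ((deleteIncidenceSet_le _ _).trans
    (deleteIncidenceSet_le _ _)) _) hxp.symm hxy hG'x (.inr ((edge_adj ..).mpr
    ⟨.inl ⟨rfl, rfl⟩, hpy⟩)) (Set.subsingleton_singleton.anti (setOf_isLow_subset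
      (S := {v, x, y, p}) (T := {y}) (hlow.trans (by simp)) (fun z hz => ?_) ?_))⟩
  · simp only [Set.mem_insert_iff, Set.mem_singleton_iff, not_or] at hz
    obtain ⟨hzv, hzx, hzy, hzp⟩ := hz
    have hz : ∀ w, G.Adj z w → w ≠ v ∧ w ≠ x := by
      rintro w h
      refine ⟨?_, ?_⟩ <;> rintro rfl
      · rcases (hv' z).mp h.symm with rfl | rfl <;> contradiction
      · rcases (hx' z).mp h.symm with rfl | rfl | rfl <;> contradiction
    rw [neighborSet_sup_edge_of_ne hzp hzy]
    ext w
    simp only [mem_neighborSet, deleteIncidenceSet_adj]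
    exact ⟨fun h => h.1.1, fun h => ⟨⟨h, hzv, (hz w h).1⟩, hzx, (hz w h).2⟩⟩
  · rintro z (rfl | rfl | rfl | rfl) hz
    · refine absurd hz (not_isLow_of_neighborSet_eq_empty ?_)
      ext; simp [G', deleteIncidenceSet_adj, edge_adj, hpv.symm, hvy.ne]
    · exact absurd hz (not_isLow_of_neighborSet_eq_empty (by ext; simpa using hG'x _))
    · rfl
    · refine absurd hz (not_isLow_of_ncard_eq (G := G) ?_ (fun h => hpv (hlow h)))
      rw [neighborSet_sup_edge_left hpy, neighborSet_deleteIncidenceSet_of_ne hxp.ne',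
        neighborSet_deleteIncidenceSet_of_not_adj hpv hpnv,
        Set.ncard_insert_sdiff_singleton (G.mem_neighborSet _ _ |>.mpr hxp.symm) hnpy]

lemma exists_isReduction_of_four_le {v u : V} (hlow : ∀ z, ¬ G.IsLow z)
    (hv : 4 ≤ (G.neighborSet v).ncard) (hvu : G.Adj v u) : ∃ G', IsReduction G' G := by
  set G' := G.deleteEdges {s(v, u)}
  have hG'v : G'.neighborSet v = G.neighborSet v \ {u} := by
    ext w; simp [G', hvu.ne]
  obtain ⟨w, hvw, hwu⟩ :=
    Set.exists_ne_of_one_lt_ncard (by omega : 1 < (G.neighborSet v).ncard) u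
  refine ⟨G', .of_le (G.deleteEdges_le _) hvu (by simp [G'])
    (ne_bot_iff_exists_adj.mpr ⟨v, w, (mem_neighborSet ..).mp (hG'v ▸ ⟨hvw, hwu⟩)⟩)
    (Set.subsingleton_singleton.anti (setOf_isLow_subset (S := {v, u}) (T := {u})
      (fun z hz => absurd hz (hlow z)) (fun z hz => ?_) ?_))⟩
  · simp only [Set.mem_insert_iff, Set.mem_singleton_iff, not_or] at hz
    ext w
    simp [G', hz.1, hz.2]
  · rintro z (rfl | rfl) hz
    · refine absurd hz (not_isLow_of_three_le ?_)
      rw [hG'v, Set.ncard_sdiff_singleton_of_mem (G.mem_neighborSet _ _ |>.mpr hvu)]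
      omega
    · rfl

lemma exists_isReduction_of_triangle {v x y : V} (hlow : {z | G.IsLow z} ⊆ {v})
    (hv : G.neighborSet v = {x, y}) (hxy : G.Adj x y) : ∃ G', IsReduction G' G := by
  have hvx : G.Adj v x := by rw [← mem_neighborSet, hv]; simp
  have hvy : G.Adj v y := by rw [← mem_neighborSet, hv]; simp
  have hx := three_le_ncard_neighborSet_of_not_isLow (fun h => hvx.ne' (hlow h)) hxy
  have hy := three_le_ncard_neighborSet_of_not_isLow (fun h => hvy.ne' (hlow h)) hxy.symm
  by_cases hx4 : 4 ≤ (G.neighborSet x).ncard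
  · exact exists_isReduction_of_triangle_of_four_le hlow hv hxy hx4
  by_cases hy4 : 4 ≤ (G.neighborSet y).ncard
  · exact exists_isReduction_of_triangle_of_four_le hlow (hv.trans (Set.pair_comm x y))
      hxy.symm hy4
  obtain ⟨p, hpv, hpy, hx'⟩ :=
    Set.exists_eq_insert_insert_singleton (s := G.neighborSet x) (by omega) hvx.symm hxy hvy.ne
  by_cases hpy' : G.Adj p y
  · obtain ⟨q, hqv, hqx, hy'⟩ :=
      Set.exists_eq_insert_insert_singleton (s := G.neighborSet y) (by omega) hvy.symm hxy.symm
        hvx.ne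
    have hxp : G.Adj x p := by rw [← mem_neighborSet, hx']; simp
    have hpq : p = q := by
      have : p ∈ G.neighborSet y := hpy'.symm
      rw [hy'] at this
      rcases this with rfl | rfl | h
      exacts [absurd rfl hpv, absurd hxp (G.irrefl), h]
    subst hpq
    exact exists_isReduction_of_diamond hlow hv hx' hy' hpv
  · exact exists_isReduction_of_triangle_of_not_adj hlow hv hx' hpv hpy hpy'

lemma containsSubdivision_or_exists_isReduction_of_forall_not_isLow (hE : G ≠ ⊥)
    (hlow : ∀ z, ¬ G.IsLow z) :
    G.ContainsSubdivision (completeGraph (Fin 4)) ∨ ∃ G', IsReduction G' G := by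
  by_cases h4 : ∃ v, 4 ≤ (G.neighborSet v).ncard
  · obtain ⟨v, hv⟩ := h4
    obtain ⟨u, hu⟩ := (Set.ncard_pos).mp (by omega : 0 < (G.neighborSet v).ncard)
    exact .inr (exists_isReduction_of_four_le hlow hv hu)
  push Not at h4
  obtain ⟨a, b, hab⟩ := ne_bot_iff_exists_adj.mp hE
  obtain ⟨x, y, z, hxy, hxz, hyz, ha⟩ := Set.ncard_eq_three.mp
    (le_antisymm (Nat.le_of_lt_succ (h4 a)) (three_le_ncard_neighborSet_of_not_isLow (hlow a) hab))
  have hadj : ∀ w, G.Adj a w ↔ w = x ∨ w = y ∨ w = z := fun w => by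
    rw [← mem_neighborSet, ha]; simp
  have hax := (hadj x).mpr (.inl rfl)
  have hay := (hadj y).mpr (.inr (.inl rfl))
  have haz := (hadj z).mpr (.inr (.inr rfl))
  have hlow' : {w | G.IsLow w} ⊆ {a} := fun w hw => absurd hw (hlow w)
  have hdeg : (G.neighborSet a).ncard ≤ 3 := Nat.le_of_lt_succ (h4 a)
  by_cases hxy' : ¬ G.Adj x y
  · exact .inr (exists_isReduction_of_not_adj hlow' hdeg hax hay hxy hxy')
  by_cases hxz' : ¬ G.Adj x z
  · exact .inr (exists_isReduction_of_not_adj hlow' hdeg hax haz hxz hxz')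
  by_cases hyz' : ¬ G.Adj y z
  · exact .inr (exists_isReduction_of_not_adj hlow' hdeg hay haz hyz hyz')
  push Not at hxy' hxz' hyz'
  classical
  have hK : G.IsNClique 4 {a, x, y, z} :=
    (is3Clique_triple_iff.mpr ⟨hxy', hxz', hyz'⟩).insert (by simp [hax, hay, haz])
  exact .inl (.of_isContained ((not_cliqueFree_iff_top_isContained 4).mp hK.not_cliqueFree))

lemma containsSubdivision_or_exists_isReduction (hE : G ≠ ⊥)
    (hlow : {z | G.IsLow z}.Subsingleton) :
    G.ContainsSubdivision (completeGraph (Fin 4)) ∨ ∃ G', IsReduction G' G := by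
  rcases hlow.eq_empty_or_singleton with h | ⟨v, hv⟩
  · exact containsSubdivision_or_exists_isReduction_of_forall_not_isLow hE
      fun z hz => (h.subset hz : z ∈ (∅ : Set V))
  right
  obtain ⟨h1, h2⟩ : 1 ≤ (G.neighborSet v).ncard ∧ (G.neighborSet v).ncard ≤ 2 :=
    (hv.symm.subset rfl : v ∈ {z | G.IsLow z})
  rcases (by omega : (G.neighborSet v).ncard = 1 ∨ (G.neighborSet v).ncard = 2) with h | h
  · exact exists_isReduction_of_ncard_eq_one hv.subset h
  obtain ⟨x, y, hxy, hv'⟩ := Set.ncard_eq_two.mp h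
  by_cases hxy' : G.Adj x y
  · exact exists_isReduction_of_triangle hv.subset hv' hxy'
  · have hvx : G.Adj v x := by rw [← mem_neighborSet, hv']; simp
    have hvy : G.Adj v y := by rw [← mem_neighborSet, hv']; simp
    exact exists_isReduction_of_not_adj hv.subset (by omega) hvx hvy hxy hxy'

theorem containsSubdivision_of_subsingleton_isLow (G : SimpleGraph V) (hE : G ≠ ⊥)
    (hlow : {z | G.IsLow z}.Subsingleton) : G.ContainsSubdivision (completeGraph (Fin 4)) := by
  induction hn : G.edgeSet.ncard using Nat.strong_induction_on generalizing G with
  | _ n ih =>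
    obtain h | ⟨G', hlt, hE', hlow', hlift⟩ := containsSubdivision_or_exists_isReduction hE hlow
    · exact h
    · exact hlift (ih _ (hn ▸ hlt) G' hE' hlow' rfl)

end Finite

end SimpleGraph

/-- Dirac: every finite simple graph of minimum degree at least 3 contains a
subdivision of `K₄`. -/
theorem stmt0 {V : Type*} [Fintype V] (G : SimpleGraph V) [DecidableRel G.Adj]
    (h : 3 ≤ G.minDegree) :
    G.ContainsSubdivision (completeGraph (Fin 4)) := by
  have hdeg : ∀ v, 3 ≤ (G.neighborSet v).ncard := fun v => by
    rw [Set.ncard_eq_toFinset_card', ← neighborFinset_def, card_neighborFinset_eq_degree]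
    exact h.trans (G.minDegree_le_degree v)
  rcases isEmpty_or_nonempty V with hV | ⟨⟨v⟩⟩
  · rw [minDegree_of_subsingleton] at h
    omega
  obtain ⟨w, hw⟩ := (Set.ncard_pos).mp (by have := hdeg v; omega : 0 < (G.neighborSet v).ncard)
  exact containsSubdivision_of_subsingleton_isLow G (ne_bot_iff_exists_adj.mpr ⟨v, w, hw⟩)
    fun z hz => absurd hz (not_isLow_of_three_le (hdeg z))
end

section
/- The graph P_n^3 is planar for all n ≥ 1. -/
open SimpleGraph

/-- The third power of the path on `n` vertices: `v i` is adjacent to `v j`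
iff `1 ≤ |i - j| ≤ 3`. -/
def pathPower3 (n : ℕ) : SimpleGraph (Fin n) :=
  SimpleGraph.fromRel (fun i j => (i : ℕ) < j ∧ (j : ℕ) ≤ i + 3)

/-- A graph is planar iff it contains no subdivision of `K₅` nor of `K₃,₃`
(Kuratowski's characterization). -/
def IsPlanar {α : Type*} (G : SimpleGraph α) : Prop :=
  ¬ G.ContainsSubdivision (completeGraph (Fin 5)) ∧
  ¬ G.ContainsSubdivision (completeBipartiteGraph (Fin 3) (Fin 3))

namespace Aux
variable {n : ℕ}

lemma adj_val {i j : Fin n} (h : (pathPower3 n).Adj i j) : (j:ℕ) ≤ (i:ℕ) + 3 := by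
  obtain ⟨hne, h | h⟩ := h <;> omega

lemma crossWalk {a b : Fin n} (w : (pathPower3 n).Walk a b) (k : ℕ)
    (ha : (a:ℕ) ≤ k) (hb : k < (b:ℕ)) :
    ∃ x y : Fin n, x ∈ w.support ∧ y ∈ w.support ∧
      (x:ℕ) ≤ k ∧ k < (y:ℕ) ∧ (y:ℕ) ≤ (x:ℕ) + 3 := by
  induction w with
  | nil => omega
  | @cons a c b h w ih =>
    by_cases hc : k < (c:ℕ)
    · exact ⟨a, c, by simp, by simp [Walk.support_cons], ha, hc, adj_val h⟩
    · obtain ⟨x, y, hx, hy, h1, h2, h3⟩ := ih (by omega) hb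
      exact ⟨x, y, by simp [Walk.support_cons, hx],
        by simp [Walk.support_cons, hy], h1, h2, h3⟩

lemma exists_sorted {m : ℕ} (f : Fin m ↪ Fin n) :
    ∃ σ : Equiv.Perm (Fin m), StrictMono (⇑f ∘ ⇑σ) := by
  refine ⟨Tuple.sort ⇑f, ?_⟩
  exact (Tuple.monotone_sort ⇑f).strictMono_of_injective
    (f.injective.comp (Equiv.injective _))

lemma sym2_ne {α γ : Type*} {g : γ → α} (hg : Function.Injective g) {i j i' j' : γ}
    (h1 : i ≠ i' ∨ j ≠ j') (h2 : i ≠ j' ∨ j ≠ i') :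
    s(g i, g j) ≠ s(g i', g j') := by
  intro hcon
  rw [Sym2.eq_iff] at hcon
  rcases hcon with ⟨e1, e2⟩ | ⟨e1, e2⟩
  · rcases h1 with h | h <;> exact h (hg ‹_›)
  · rcases h2 with h | h <;> exact h (hg ‹_›)

variable {β : Type*} {H : SimpleGraph β} {f : β ↪ Fin n}
  {p : ∀ ⦃u v : β⦄, H.Adj u v → (pathPower3 n).Walk (f u) (f v)}

lemma share_right
    (hdisj : ∀ ⦃u v u' v' : β⦄ (h : H.Adj u v) (h' : H.Adj u' v'),
      s(u, v) ≠ s(u', v') → ∀ x, x ∈ (p h).support → x ∈ (p h').support →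
        (x = f u ∨ x = f v) ∧ (x = f u' ∨ x = f v'))
    {u v u' v' : β} (h : H.Adj u v) (h' : H.Adj u' v') (hne : s(u,v) ≠ s(u',v'))
    {k : ℕ} (hu : (f u : ℕ) ≤ k) (hu' : (f u' : ℕ) ≤ k)
    {y : Fin n} (hy : y ∈ (p h).support) (hy' : y ∈ (p h').support) (hk : k < (y:ℕ)) :
    v = v' ∧ y = f v := by
  obtain ⟨h1, h2⟩ := hdisj h h' hne y hy hy'
  have e1 : y = f v := by
    rcases h1 with e | e
    · exact absurd hk (by rw [e]; omega)
    · exact e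
  have e2 : y = f v' := by
    rcases h2 with e | e
    · exact absurd hk (by rw [e]; omega)
    · exact e
  exact ⟨f.injective (e1 ▸ e2.symm ▸ rfl : f v = f v'), e1⟩

lemma share_left
    (hdisj : ∀ ⦃u v u' v' : β⦄ (h : H.Adj u v) (h' : H.Adj u' v'),
      s(u, v) ≠ s(u', v') → ∀ x, x ∈ (p h).support → x ∈ (p h').support →
        (x = f u ∨ x = f v) ∧ (x = f u' ∨ x = f v'))
    {u v u' v' : β} (h : H.Adj u v) (h' : H.Adj u' v') (hne : s(u,v) ≠ s(u',v'))
    {k : ℕ} (hv : k < (f v : ℕ)) (hv' : k < (f v' : ℕ))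
    {x : Fin n} (hx : x ∈ (p h).support) (hx' : x ∈ (p h').support) (hk : (x:ℕ) ≤ k) :
    u = u' ∧ x = f u := by
  obtain ⟨h1, h2⟩ := hdisj h h' hne x hx hx'
  have e1 : x = f u := by
    rcases h1 with e | e
    · exact e
    · exact absurd hk (by rw [e]; omega)
  have e2 : x = f u' := by
    rcases h2 with e | e
    · exact e
    · exact absurd hk (by rw [e]; omega)
  exact ⟨f.injective (e1 ▸ e2.symm ▸ rfl : f u = f u'), e1⟩

end Aux

theorem noK5 (n : ℕ) : ¬ (pathPower3 n).ContainsSubdivision (completeGraph (Fin 5)) := by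
  rintro ⟨f, p, hpath, hbr, hdisj⟩
  obtain ⟨σ, hmono⟩ := Aux.exists_sorted f
  have hadj : ∀ {i j : Fin 5}, i ≠ j → (completeGraph (Fin 5)).Adj (σ i) (σ j) := by
    intro i j h
    simpa [completeGraph] using σ.injective.ne h
  have ha : ∀ {i j : Fin 5}, i < j → (f (σ i) : ℕ) < (f (σ j) : ℕ) := by
    intro i j h
    exact_mod_cast hmono h
  -- val-level right-sharing
  have DrightV : ∀ {i j i' j' : Fin 5} (hij : i ≠ j) (hij' : i' ≠ j') (k : ℕ),
      (f (σ i) : ℕ) ≤ k → (f (σ i') : ℕ) ≤ k → ∀ {y y' : Fin n},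
      y ∈ (p (hadj hij)).support → y' ∈ (p (hadj hij')).support →
      k < (y:ℕ) → (y:ℕ) = (y':ℕ) → (i ≠ i' ∨ j ≠ j') → (i ≠ j' ∨ j ≠ i') →
      j = j' ∧ y = f (σ j) := by
    intro i j i' j' hij hij' k hi hi' y y' hy hy' hk hv hs hs2
    have e : y = y' := Fin.ext hv
    subst e
    obtain ⟨h1, h2⟩ := Aux.share_right hdisj (hadj hij) (hadj hij')
      (Aux.sym2_ne σ.injective hs hs2) hi hi' hy hy' hk
    exact ⟨σ.injective h1, h2⟩
  have DleftV : ∀ {i j i' j' : Fin 5} (hij : i ≠ j) (hij' : i' ≠ j') (k : ℕ),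
      k < (f (σ j) : ℕ) → k < (f (σ j') : ℕ) → ∀ {x x' : Fin n},
      x ∈ (p (hadj hij)).support → x' ∈ (p (hadj hij')).support →
      (x:ℕ) ≤ k → (x:ℕ) = (x':ℕ) → (i ≠ i' ∨ j ≠ j') → (i ≠ j' ∨ j ≠ i') →
      i = i' ∧ x = f (σ i) := by
    intro i j i' j' hij hij' k hj hj' x x' hx hx' hk hv hs hs2
    have e : x = x' := Fin.ext hv
    subst e
    obtain ⟨h1, h2⟩ := Aux.share_left hdisj (hadj hij) (hadj hij')
      (Aux.sym2_ne σ.injective hs hs2) hj hj' hx hx' hk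
    exact ⟨σ.injective h1, h2⟩
  have h02 : (0:Fin 5) ≠ 2 := by decide
  have h03 : (0:Fin 5) ≠ 3 := by decide
  have h04 : (0:Fin 5) ≠ 4 := by decide
  have h12 : (1:Fin 5) ≠ 2 := by decide
  have h13 : (1:Fin 5) ≠ 3 := by decide
  have h14 : (1:Fin 5) ≠ 4 := by decide
  have h23 : (2:Fin 5) ≠ 3 := by decide
  have h24 : (2:Fin 5) ≠ 4 := by decide
  -- ===== Cut 1 : k = val of F 1 =====
  obtain ⟨x02, y02, hx02s, hy02s, hx02, hy02, hb02⟩ :=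
    Aux.crossWalk (p (hadj h02)) (f (σ 1) : ℕ) (le_of_lt (ha (by decide))) (ha (by decide))
  obtain ⟨x03, y03, hx03s, hy03s, hx03, hy03, hb03⟩ :=
    Aux.crossWalk (p (hadj h03)) (f (σ 1) : ℕ) (le_of_lt (ha (by decide))) (ha (by decide))
  obtain ⟨x04, y04, hx04s, hy04s, hx04, hy04, hb04⟩ :=
    Aux.crossWalk (p (hadj h04)) (f (σ 1) : ℕ) (le_of_lt (ha (by decide))) (ha (by decide))
  obtain ⟨x12, y12, hx12s, hy12s, hx12, hy12, hb12⟩ :=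
    Aux.crossWalk (p (hadj h12)) (f (σ 1) : ℕ) (le_refl _) (ha (by decide))
  obtain ⟨x13, y13, hx13s, hy13s, hx13, hy13, hb13⟩ :=
    Aux.crossWalk (p (hadj h13)) (f (σ 1) : ℕ) (le_refl _) (ha (by decide))
  obtain ⟨x14, y14, hx14s, hy14s, hx14, hy14, hb14⟩ :=
    Aux.crossWalk (p (hadj h14)) (f (σ 1) : ℕ) (le_refl _) (ha (by decide))
  have l0 : (f (σ 0) : ℕ) ≤ (f (σ 1) : ℕ) := le_of_lt (ha (by decide))
  have l1 : (f (σ 1) : ℕ) ≤ (f (σ 1) : ℕ) := le_refl _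
  -- pairwise distinctness of y02 y03 y04
  have d23 : (y02:ℕ) ≠ (y03:ℕ) := fun h =>
    absurd (DrightV h02 h03 _ l0 l0 hy02s hy03s hy02 h (by decide) (by decide)).1 (by decide)
  have d24 : (y02:ℕ) ≠ (y04:ℕ) := fun h =>
    absurd (DrightV h02 h04 _ l0 l0 hy02s hy04s hy02 h (by decide) (by decide)).1 (by decide)
  have d34 : (y03:ℕ) ≠ (y04:ℕ) := fun h =>
    absurd (DrightV h03 h04 _ l0 l0 hy03s hy04s hy03 h (by decide) (by decide)).1 (by decide)
  have e2 : y12 = f (σ 2) := by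
    have c3 : (y12:ℕ) ≠ (y03:ℕ) := fun h =>
      absurd (DrightV h12 h03 _ l1 l0 hy12s hy03s hy12 h (by decide) (by decide)).1 (by decide)
    have c4 : (y12:ℕ) ≠ (y04:ℕ) := fun h =>
      absurd (DrightV h12 h04 _ l1 l0 hy12s hy04s hy12 h (by decide) (by decide)).1 (by decide)
    have h1 : (y12:ℕ) = (y02:ℕ) := by omega
    exact (DrightV h12 h02 _ l1 l0 hy12s hy02s hy12 h1 (by decide) (by decide)).2
  have e3 : y13 = f (σ 3) := by
    have c2 : (y13:ℕ) ≠ (y02:ℕ) := fun h =>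
      absurd (DrightV h13 h02 _ l1 l0 hy13s hy02s hy13 h (by decide) (by decide)).1 (by decide)
    have c4 : (y13:ℕ) ≠ (y04:ℕ) := fun h =>
      absurd (DrightV h13 h04 _ l1 l0 hy13s hy04s hy13 h (by decide) (by decide)).1 (by decide)
    have h1 : (y13:ℕ) = (y03:ℕ) := by omega
    exact (DrightV h13 h03 _ l1 l0 hy13s hy03s hy13 h1 (by decide) (by decide)).2
  have e4 : y14 = f (σ 4) := by
    have c2 : (y14:ℕ) ≠ (y02:ℕ) := fun h =>
      absurd (DrightV h14 h02 _ l1 l0 hy14s hy02s hy14 h (by decide) (by decide)).1 (by decide)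
    have c3 : (y14:ℕ) ≠ (y03:ℕ) := fun h =>
      absurd (DrightV h14 h03 _ l1 l0 hy14s hy03s hy14 h (by decide) (by decide)).1 (by decide)
    have h1 : (y14:ℕ) = (y04:ℕ) := by omega
    exact (DrightV h14 h04 _ l1 l0 hy14s hy04s hy14 h1 (by decide) (by decide)).2
  have v2 : (f (σ 2) : ℕ) = (y12:ℕ) := by rw [e2]
  have v3 : (f (σ 3) : ℕ) = (y13:ℕ) := by rw [e3]
  have v4 : (f (σ 4) : ℕ) = (y14:ℕ) := by rw [e4]
  have m23 : (f (σ 2) : ℕ) < (f (σ 3) : ℕ) := ha (by decide)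
  have m34 : (f (σ 3) : ℕ) < (f (σ 4) : ℕ) := ha (by decide)
  have con234 : (f (σ 2) : ℕ) = (f (σ 1) : ℕ) + 1 ∧
      (f (σ 3) : ℕ) = (f (σ 1) : ℕ) + 2 ∧ (f (σ 4) : ℕ) = (f (σ 1) : ℕ) + 3 := by
    omega
  -- ===== Cut 2 : k = val of F 2 =====
  obtain ⟨u03, w03, hu03s, hw03s, hu03, hw03, hc03⟩ :=
    Aux.crossWalk (p (hadj h03)) (f (σ 2) : ℕ) (le_of_lt (ha (by decide))) (ha (by decide))
  obtain ⟨u13, w13, hu13s, hw13s, hu13, hw13, hc13⟩ :=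
    Aux.crossWalk (p (hadj h13)) (f (σ 2) : ℕ) (le_of_lt (ha (by decide))) (ha (by decide))
  obtain ⟨u23, w23, hu23s, hw23s, hu23, hw23, hc23⟩ :=
    Aux.crossWalk (p (hadj h23)) (f (σ 2) : ℕ) (le_refl _) (ha (by decide))
  obtain ⟨u04, w04, hu04s, hw04s, hu04, hw04, hc04⟩ :=
    Aux.crossWalk (p (hadj h04)) (f (σ 2) : ℕ) (le_of_lt (ha (by decide))) (ha (by decide))
  have r3 : (f (σ 2) : ℕ) < (f (σ 3) : ℕ) := ha (by decide)
  have r4 : (f (σ 2) : ℕ) < (f (σ 4) : ℕ) := ha (by decide)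
  have g01 : (u03:ℕ) ≠ (u13:ℕ) := fun h =>
    absurd (DleftV h03 h13 _ r3 r3 hu03s hu13s hu03 h (by decide) (by decide)).1 (by decide)
  have g02 : (u03:ℕ) ≠ (u23:ℕ) := fun h =>
    absurd (DleftV h03 h23 _ r3 r3 hu03s hu23s hu03 h (by decide) (by decide)).1 (by decide)
  have g12 : (u13:ℕ) ≠ (u23:ℕ) := fun h =>
    absurd (DleftV h13 h23 _ r3 r3 hu13s hu23s hu13 h (by decide) (by decide)).1 (by decide)
  have e0 : u04 = f (σ 0) := by
    have c1 : (u04:ℕ) ≠ (u13:ℕ) := fun h =>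
      absurd (DleftV h04 h13 _ r4 r3 hu04s hu13s hu04 h (by decide) (by decide)).1 (by decide)
    have c2 : (u04:ℕ) ≠ (u23:ℕ) := fun h =>
      absurd (DleftV h04 h23 _ r4 r3 hu04s hu23s hu04 h (by decide) (by decide)).1 (by decide)
    have h1 : (u04:ℕ) = (u03:ℕ) := by omega
    exact (DleftV h04 h03 _ r4 r3 hu04s hu03s hu04 h1 (by decide) (by decide)).2
  have v0 : (f (σ 0) : ℕ) = (u04:ℕ) := by rw [e0]
  have m01 : (f (σ 0) : ℕ) < (f (σ 1) : ℕ) := ha (by decide)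
  have m12 : (f (σ 1) : ℕ) < (f (σ 2) : ℕ) := ha (by decide)
  -- now all five are consecutive
  have hconsec : (f (σ 1) : ℕ) = (f (σ 0) : ℕ) + 1 ∧ (f (σ 2) : ℕ) = (f (σ 0) : ℕ) + 2 ∧
      (f (σ 3) : ℕ) = (f (σ 0) : ℕ) + 3 ∧ (f (σ 4) : ℕ) = (f (σ 0) : ℕ) + 4 := by
    omega
  -- ===== Final contradiction on edge (0,4) =====
  obtain ⟨q, z, hqs, hzs, hq, hz1, hz2⟩ :=
    Aux.crossWalk (p (hadj h04)) (f (σ 0) : ℕ) (le_refl _) (ha (by decide))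
  have hzv : (z:ℕ) = (f (σ 1) : ℕ) ∨ (z:ℕ) = (f (σ 2) : ℕ) ∨ (z:ℕ) = (f (σ 3) : ℕ) := by
    omega
  have final : ∀ m : Fin 5, m ≠ 0 → m ≠ 4 → z = f (σ m) → False := by
    intro m hm0 hm4 hzm
    rcases hbr (hadj h04) (σ m) (by rw [← hzm]; exact hzs) with h | h
    · exact hm0 (σ.injective h)
    · exact hm4 (σ.injective h)
  rcases hzv with h | h | h
  · exact final 1 (by decide) (by decide) (Fin.ext h)
  · exact final 2 (by decide) (by decide) (Fin.ext h)
  · exact final 3 (by decide) (by decide) (Fin.ext h)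

theorem noK33 (n : ℕ) :
    ¬ (pathPower3 n).ContainsSubdivision (completeBipartiteGraph (Fin 3) (Fin 3)) := by
  rintro ⟨f, p, hpath, hbr, hdisj⟩
  have key : ∃ c : Fin 6 → Fin 3 ⊕ Fin 3, Function.Injective c ∧
      ∀ {i j : Fin 6}, i < j → (f (c i) : ℕ) < (f (c j) : ℕ) := by
    have e0 : Fin 6 ≃ Fin 3 ⊕ Fin 3 :=
      (finCongr (by norm_num)).trans (finSumFinEquiv (m := 3) (n := 3)).symm
    obtain ⟨σ, hmono⟩ := Aux.exists_sorted (e0.toEmbedding.trans f)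
    refine ⟨fun i => e0 (σ i), fun i j h => σ.injective (e0.injective h), ?_⟩
    intro i j h
    exact_mod_cast hmono h
  obtain ⟨c, cInj, ha⟩ := key
  have hadj : ∀ {i j : Fin 6}, (c i).isLeft ≠ (c j).isLeft →
      (completeBipartiteGraph (Fin 3) (Fin 3)).Adj (c i) (c j) := by
    intro i j h
    rcases hi : c i with a | a <;> rcases hj : c j with b | b <;> rw [hi, hj] at h
    · exact absurd rfl h
    · exact Or.inl ⟨rfl, rfl⟩
    · exact Or.inr ⟨rfl, rfl⟩
    · exact absurd rfl h
  have pigeon : ∀ i1 i2 i3 i4 : Fin 6, i1 ≠ i2 → i1 ≠ i3 → i1 ≠ i4 → i2 ≠ i3 → i2 ≠ i4 →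
      i3 ≠ i4 → (c i1).isLeft = (c i2).isLeft → (c i1).isLeft = (c i3).isLeft →
      (c i1).isLeft = (c i4).isLeft → False := by
    intro i1 i2 i3 i4 h12 h13 h14 h23 h24 h34 e2 e3 e4
    have pig : ∀ s1 s2 s3 s4 : Fin 3 ⊕ Fin 3, s1.isLeft = s2.isLeft → s1.isLeft = s3.isLeft →
        s1.isLeft = s4.isLeft →
        s1 = s2 ∨ s1 = s3 ∨ s1 = s4 ∨ s2 = s3 ∨ s2 = s4 ∨ s3 = s4 := by decide
    rcases pig (c i1) (c i2) (c i3) (c i4) e2 e3 e4 with h|h|h|h|h|h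
    exacts [h12 (cInj h), h13 (cInj h), h14 (cInj h), h23 (cInj h), h24 (cInj h), h34 (cInj h)]
  have DrightV : ∀ {i j i' j' : Fin 6} (hij : (c i).isLeft ≠ (c j).isLeft)
      (hij' : (c i').isLeft ≠ (c j').isLeft) (k : ℕ),
      (f (c i) : ℕ) ≤ k → (f (c i') : ℕ) ≤ k → ∀ {y y' : Fin n},
      y ∈ (p (hadj hij)).support → y' ∈ (p (hadj hij')).support →
      k < (y:ℕ) → (y:ℕ) = (y':ℕ) → (i ≠ i' ∨ j ≠ j') → (i ≠ j' ∨ j ≠ i') →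
      j = j' ∧ y = f (c j) := by
    intro i j i' j' hij hij' k hi hi' y y' hy hy' hk hv hs hs2
    have e : y = y' := Fin.ext hv
    subst e
    obtain ⟨h1, h2⟩ := Aux.share_right hdisj (hadj hij) (hadj hij')
      (Aux.sym2_ne cInj hs hs2) hi hi' hy hy' hk
    exact ⟨cInj h1, h2⟩
  have DleftV : ∀ {i j i' j' : Fin 6} (hij : (c i).isLeft ≠ (c j).isLeft)
      (hij' : (c i').isLeft ≠ (c j').isLeft) (k : ℕ),
      k < (f (c j) : ℕ) → k < (f (c j') : ℕ) → ∀ {x x' : Fin n},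
      x ∈ (p (hadj hij)).support → x' ∈ (p (hadj hij')).support →
      (x:ℕ) ≤ k → (x:ℕ) = (x':ℕ) → (i ≠ i' ∨ j ≠ j') → (i ≠ j' ∨ j ≠ i') →
      i = i' ∧ x = f (c i) := by
    intro i j i' j' hij hij' k hj hj' x x' hx hx' hk hv hs hs2
    have e : x = x' := Fin.ext hv
    subst e
    obtain ⟨h1, h2⟩ := Aux.share_left hdisj (hadj hij) (hadj hij')
      (Aux.sym2_ne cInj hs hs2) hj hj' hx hx' hk
    exact ⟨cInj h1, h2⟩
  -- Step 1: c 0 and c 1 are in the same class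
  have step1 : (c 0).isLeft = (c 1).isLeft := by
    by_contra hne
    have pick : ∀ j : Fin 6, ∃ i : Fin 6, (i = 0 ∨ i = 1) ∧ (c i).isLeft ≠ (c j).isLeft := by
      intro j
      by_cases h : (c 0).isLeft = (c j).isLeft
      · exact ⟨1, Or.inr rfl, fun e => hne (h.trans e.symm)⟩
      · exact ⟨0, Or.inl rfl, h⟩
    obtain ⟨i2, hi2, hc2⟩ := pick 2
    obtain ⟨i3, hi3, hc3⟩ := pick 3
    obtain ⟨i4, hi4, hc4⟩ := pick 4
    obtain ⟨i5, hi5, hc5⟩ := pick 5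
    have le_i : ∀ {i : Fin 6}, (i = 0 ∨ i = 1) → (f (c i) : ℕ) ≤ (f (c 1) : ℕ) := by
      rintro i (rfl | rfl)
      · exact le_of_lt (ha (by decide))
      · exact le_refl _
    obtain ⟨x2, y2, hx2s, hy2s, hx2, hy2, hb2⟩ :=
      Aux.crossWalk (p (hadj hc2)) (f (c 1) : ℕ) (le_i hi2) (ha (by decide))
    obtain ⟨x3, y3, hx3s, hy3s, hx3, hy3, hb3⟩ :=
      Aux.crossWalk (p (hadj hc3)) (f (c 1) : ℕ) (le_i hi3) (ha (by decide))
    obtain ⟨x4, y4, hx4s, hy4s, hx4, hy4, hb4⟩ :=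
      Aux.crossWalk (p (hadj hc4)) (f (c 1) : ℕ) (le_i hi4) (ha (by decide))
    obtain ⟨x5, y5, hx5s, hy5s, hx5, hy5, hb5⟩ :=
      Aux.crossWalk (p (hadj hc5)) (f (c 1) : ℕ) (le_i hi5) (ha (by decide))
    have d23 : (y2:ℕ) ≠ (y3:ℕ) := fun h =>
      absurd (DrightV hc2 hc3 _ (le_i hi2) (le_i hi3) hy2s hy3s hy2 h (Or.inr (by decide))
        (Or.inl (by rcases hi2 with rfl | rfl <;> decide))).1 (by decide)
    have d24 : (y2:ℕ) ≠ (y4:ℕ) := fun h =>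
      absurd (DrightV hc2 hc4 _ (le_i hi2) (le_i hi4) hy2s hy4s hy2 h (Or.inr (by decide))
        (Or.inl (by rcases hi2 with rfl | rfl <;> decide))).1 (by decide)
    have d25 : (y2:ℕ) ≠ (y5:ℕ) := fun h =>
      absurd (DrightV hc2 hc5 _ (le_i hi2) (le_i hi5) hy2s hy5s hy2 h (Or.inr (by decide))
        (Or.inl (by rcases hi2 with rfl | rfl <;> decide))).1 (by decide)
    have d34 : (y3:ℕ) ≠ (y4:ℕ) := fun h =>
      absurd (DrightV hc3 hc4 _ (le_i hi3) (le_i hi4) hy3s hy4s hy3 h (Or.inr (by decide))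
        (Or.inl (by rcases hi3 with rfl | rfl <;> decide))).1 (by decide)
    have d35 : (y3:ℕ) ≠ (y5:ℕ) := fun h =>
      absurd (DrightV hc3 hc5 _ (le_i hi3) (le_i hi5) hy3s hy5s hy3 h (Or.inr (by decide))
        (Or.inl (by rcases hi3 with rfl | rfl <;> decide))).1 (by decide)
    have d45 : (y4:ℕ) ≠ (y5:ℕ) := fun h =>
      absurd (DrightV hc4 hc5 _ (le_i hi4) (le_i hi5) hy4s hy5s hy4 h (Or.inr (by decide))
        (Or.inl (by rcases hi4 with rfl | rfl <;> decide))).1 (by decide)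
    omega
  -- Step 2: c 4 and c 5 are in the same class
  have step2 : (c 4).isLeft = (c 5).isLeft := by
    by_contra hne
    have pick : ∀ i : Fin 6, ∃ j : Fin 6, (j = 4 ∨ j = 5) ∧ (c i).isLeft ≠ (c j).isLeft := by
      intro i
      by_cases h : (c i).isLeft = (c 4).isLeft
      · exact ⟨5, Or.inr rfl, fun e => hne (h.symm.trans e)⟩
      · exact ⟨4, Or.inl rfl, h⟩
    obtain ⟨j0, hj0, hc0⟩ := pick 0
    obtain ⟨j1, hj1, hc1⟩ := pick 1
    obtain ⟨j2, hj2, hc2⟩ := pick 2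
    obtain ⟨j3, hj3, hc3⟩ := pick 3
    have gt_j : ∀ {j : Fin 6}, (j = 4 ∨ j = 5) → (f (c 3) : ℕ) < (f (c j) : ℕ) := by
      rintro j (rfl | rfl)
      · exact ha (by decide)
      · exact ha (by decide)
    obtain ⟨x0, y0, hx0s, hy0s, hx0, hy0, hb0⟩ :=
      Aux.crossWalk (p (hadj hc0)) (f (c 3) : ℕ) (le_of_lt (ha (by decide))) (gt_j hj0)
    obtain ⟨x1, y1, hx1s, hy1s, hx1, hy1, hb1⟩ :=
      Aux.crossWalk (p (hadj hc1)) (f (c 3) : ℕ) (le_of_lt (ha (by decide))) (gt_j hj1)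
    obtain ⟨x2, y2, hx2s, hy2s, hx2, hy2, hb2⟩ :=
      Aux.crossWalk (p (hadj hc2)) (f (c 3) : ℕ) (le_of_lt (ha (by decide))) (gt_j hj2)
    obtain ⟨x3, y3, hx3s, hy3s, hx3, hy3, hb3⟩ :=
      Aux.crossWalk (p (hadj hc3)) (f (c 3) : ℕ) (le_refl _) (gt_j hj3)
    have d01 : (x0:ℕ) ≠ (x1:ℕ) := fun h =>
      absurd (DleftV hc0 hc1 _ (gt_j hj0) (gt_j hj1) hx0s hx1s hx0 h (Or.inl (by decide))
        (Or.inl (by rcases hj1 with rfl | rfl <;> decide))).1 (by decide)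
    have d02 : (x0:ℕ) ≠ (x2:ℕ) := fun h =>
      absurd (DleftV hc0 hc2 _ (gt_j hj0) (gt_j hj2) hx0s hx2s hx0 h (Or.inl (by decide))
        (Or.inl (by rcases hj2 with rfl | rfl <;> decide))).1 (by decide)
    have d03 : (x0:ℕ) ≠ (x3:ℕ) := fun h =>
      absurd (DleftV hc0 hc3 _ (gt_j hj0) (gt_j hj3) hx0s hx3s hx0 h (Or.inl (by decide))
        (Or.inl (by rcases hj3 with rfl | rfl <;> decide))).1 (by decide)
    have d12 : (x1:ℕ) ≠ (x2:ℕ) := fun h =>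
      absurd (DleftV hc1 hc2 _ (gt_j hj1) (gt_j hj2) hx1s hx2s hx1 h (Or.inl (by decide))
        (Or.inl (by rcases hj2 with rfl | rfl <;> decide))).1 (by decide)
    have d13 : (x1:ℕ) ≠ (x3:ℕ) := fun h =>
      absurd (DleftV hc1 hc3 _ (gt_j hj1) (gt_j hj3) hx1s hx3s hx1 h (Or.inl (by decide))
        (Or.inl (by rcases hj3 with rfl | rfl <;> decide))).1 (by decide)
    have d23 : (x2:ℕ) ≠ (x3:ℕ) := fun h =>
      absurd (DleftV hc2 hc3 _ (gt_j hj2) (gt_j hj3) hx2s hx3s hx2 h (Or.inl (by decide))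
        (Or.inl (by rcases hj3 with rfl | rfl <;> decide))).1 (by decide)
    omega
  -- Step 3: classes of position 0 and position 4 differ
  have hXY : (c 0).isLeft ≠ (c 4).isLeft := fun h =>
    pigeon 0 1 4 5 (by decide) (by decide) (by decide) (by decide) (by decide) (by decide)
      step1 h (h.trans step2)
  have h05 : (c 0).isLeft ≠ (c 5).isLeft := fun e => hXY (e.trans step2.symm)
  have h14 : (c 1).isLeft ≠ (c 4).isLeft := fun e => hXY (step1.trans e)
  have h15 : (c 1).isLeft ≠ (c 5).isLeft := fun e => h05 (step1.trans e)
  by_cases hA : (c 2).isLeft = (c 0).isLeft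
  · -- Case A: classes are {0,1,2} vs {3,4,5}
    have h3Y : (c 0).isLeft ≠ (c 3).isLeft := fun e =>
      pigeon 0 1 2 3 (by decide) (by decide) (by decide) (by decide) (by decide) (by decide)
        step1 hA.symm e
    have h13 : (c 1).isLeft ≠ (c 3).isLeft := fun e => h3Y (step1.trans e)
    have h23 : (c 2).isLeft ≠ (c 3).isLeft := fun e => h3Y (hA.symm.trans e)
    have h04 := hXY
    have h24 : (c 2).isLeft ≠ (c 4).isLeft := fun e => hXY (hA.symm.trans e)
    have h25 : (c 2).isLeft ≠ (c 5).isLeft := fun e => h05 (hA.symm.trans e)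
    -- Cut (right side) at k = val of f (c 2)
    obtain ⟨x03, y03, hx03s, hy03s, hx03, hy03, hb03⟩ :=
      Aux.crossWalk (p (hadj h3Y)) (f (c 2) : ℕ) (le_of_lt (ha (by decide))) (ha (by decide))
    obtain ⟨x04, y04, hx04s, hy04s, hx04, hy04, hb04⟩ :=
      Aux.crossWalk (p (hadj h04)) (f (c 2) : ℕ) (le_of_lt (ha (by decide))) (ha (by decide))
    obtain ⟨x05, y05, hx05s, hy05s, hx05, hy05, hb05⟩ :=
      Aux.crossWalk (p (hadj h05)) (f (c 2) : ℕ) (le_of_lt (ha (by decide))) (ha (by decide))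
    obtain ⟨x13, y13, hx13s, hy13s, hx13, hy13, hb13⟩ :=
      Aux.crossWalk (p (hadj h13)) (f (c 2) : ℕ) (le_of_lt (ha (by decide))) (ha (by decide))
    obtain ⟨x14, y14, hx14s, hy14s, hx14, hy14, hb14⟩ :=
      Aux.crossWalk (p (hadj h14)) (f (c 2) : ℕ) (le_of_lt (ha (by decide))) (ha (by decide))
    obtain ⟨x15, y15, hx15s, hy15s, hx15, hy15, hb15⟩ :=
      Aux.crossWalk (p (hadj h15)) (f (c 2) : ℕ) (le_of_lt (ha (by decide))) (ha (by decide))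
    obtain ⟨x23, y23, hx23s, hy23s, hx23, hy23, hb23⟩ :=
      Aux.crossWalk (p (hadj h23)) (f (c 2) : ℕ) (le_refl _) (ha (by decide))
    have l0 : (f (c 0) : ℕ) ≤ (f (c 2) : ℕ) := le_of_lt (ha (by decide))
    have l1 : (f (c 1) : ℕ) ≤ (f (c 2) : ℕ) := le_of_lt (ha (by decide))
    -- right-side pigeonhole gives positions of f(c 3), f(c 4), f(c 5)
    have d34 : (y03:ℕ) ≠ (y04:ℕ) := fun h =>
      absurd (DrightV h3Y h04 _ l0 l0 hy03s hy04s hy03 h (by decide) (by decide)).1 (by decide)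
    have d35 : (y03:ℕ) ≠ (y05:ℕ) := fun h =>
      absurd (DrightV h3Y h05 _ l0 l0 hy03s hy05s hy03 h (by decide) (by decide)).1 (by decide)
    have d45 : (y04:ℕ) ≠ (y05:ℕ) := fun h =>
      absurd (DrightV h04 h05 _ l0 l0 hy04s hy05s hy04 h (by decide) (by decide)).1 (by decide)
    have e3 : y13 = f (c 3) := by
      have c4 : (y13:ℕ) ≠ (y04:ℕ) := fun h =>
        absurd (DrightV h13 h04 _ l1 l0 hy13s hy04s hy13 h (by decide) (by decide)).1 (by decide)
      have c5 : (y13:ℕ) ≠ (y05:ℕ) := fun h =>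
        absurd (DrightV h13 h05 _ l1 l0 hy13s hy05s hy13 h (by decide) (by decide)).1 (by decide)
      have h1 : (y13:ℕ) = (y03:ℕ) := by omega
      exact (DrightV h13 h3Y _ l1 l0 hy13s hy03s hy13 h1 (by decide) (by decide)).2
    have e4 : y14 = f (c 4) := by
      have c3 : (y14:ℕ) ≠ (y03:ℕ) := fun h =>
        absurd (DrightV h14 h3Y _ l1 l0 hy14s hy03s hy14 h (by decide) (by decide)).1 (by decide)
      have c5 : (y14:ℕ) ≠ (y05:ℕ) := fun h =>
        absurd (DrightV h14 h05 _ l1 l0 hy14s hy05s hy14 h (by decide) (by decide)).1 (by decide)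
      have h1 : (y14:ℕ) = (y04:ℕ) := by omega
      exact (DrightV h14 h04 _ l1 l0 hy14s hy04s hy14 h1 (by decide) (by decide)).2
    have e5 : y15 = f (c 5) := by
      have c3 : (y15:ℕ) ≠ (y03:ℕ) := fun h =>
        absurd (DrightV h15 h3Y _ l1 l0 hy15s hy03s hy15 h (by decide) (by decide)).1 (by decide)
      have c4 : (y15:ℕ) ≠ (y04:ℕ) := fun h =>
        absurd (DrightV h15 h04 _ l1 l0 hy15s hy04s hy15 h (by decide) (by decide)).1 (by decide)
      have h1 : (y15:ℕ) = (y05:ℕ) := by omega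
      exact (DrightV h15 h05 _ l1 l0 hy15s hy05s hy15 h1 (by decide) (by decide)).2
    have v3 : (f (c 3) : ℕ) = (y13:ℕ) := by rw [e3]
    have v4 : (f (c 4) : ℕ) = (y14:ℕ) := by rw [e4]
    have v5 : (f (c 5) : ℕ) = (y15:ℕ) := by rw [e5]
    have m34 : (f (c 3) : ℕ) < (f (c 4) : ℕ) := ha (by decide)
    have m45 : (f (c 4) : ℕ) < (f (c 5) : ℕ) := ha (by decide)
    -- left-side pigeonhole at the same cut
    have r3 : (f (c 2) : ℕ) < (f (c 3) : ℕ) := ha (by decide)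
    have r4 : (f (c 2) : ℕ) < (f (c 4) : ℕ) := ha (by decide)
    have g01 : (x03:ℕ) ≠ (x13:ℕ) := fun h =>
      absurd (DleftV h3Y h13 _ r3 r3 hx03s hx13s hx03 h (by decide) (by decide)).1 (by decide)
    have g02 : (x03:ℕ) ≠ (x23:ℕ) := fun h =>
      absurd (DleftV h3Y h23 _ r3 r3 hx03s hx23s hx03 h (by decide) (by decide)).1 (by decide)
    have g12 : (x13:ℕ) ≠ (x23:ℕ) := fun h =>
      absurd (DleftV h13 h23 _ r3 r3 hx13s hx23s hx13 h (by decide) (by decide)).1 (by decide)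
    have e0' : x04 = f (c 0) := by
      have c1 : (x04:ℕ) ≠ (x13:ℕ) := fun h =>
        absurd (DleftV h04 h13 _ r4 r3 hx04s hx13s hx04 h (by decide) (by decide)).1 (by decide)
      have c2 : (x04:ℕ) ≠ (x23:ℕ) := fun h =>
        absurd (DleftV h04 h23 _ r4 r3 hx04s hx23s hx04 h (by decide) (by decide)).1 (by decide)
      have h1 : (x04:ℕ) = (x03:ℕ) := by omega
      exact (DleftV h04 h3Y _ r4 r3 hx04s hx03s hx04 h1 (by decide) (by decide)).2
    have v0 : (f (c 0) : ℕ) = (x04:ℕ) := by rw [e0']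
    have m01 : (f (c 0) : ℕ) < (f (c 1) : ℕ) := ha (by decide)
    have m12 : (f (c 1) : ℕ) < (f (c 2) : ℕ) := ha (by decide)
    -- all six are consecutive; final contradiction on the edge (0,4)
    obtain ⟨q, z, hqs, hzs, hq, hz1, hz2⟩ :=
      Aux.crossWalk (p (hadj h04)) (f (c 0) : ℕ) (le_refl _) (ha (by decide))
    have hzv : (z:ℕ) = (f (c 1) : ℕ) ∨ (z:ℕ) = (f (c 2) : ℕ) ∨ (z:ℕ) = (f (c 3) : ℕ) := by
      omega
    have final : ∀ m : Fin 6, m ≠ 0 → m ≠ 4 → z = f (c m) → False := by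
      intro m hm0 hm4 hzm
      rcases hbr (hadj h04) (c m) (by rw [← hzm]; exact hzs) with h | h
      · exact hm0 (cInj h)
      · exact hm4 (cInj h)
    rcases hzv with h | h | h
    · exact final 1 (by decide) (by decide) (Fin.ext h)
    · exact final 2 (by decide) (by decide) (Fin.ext h)
    · exact final 3 (by decide) (by decide) (Fin.ext h)
  · -- Case B: position 2 is in the class of {4,5}
    have h02 : (c 0).isLeft ≠ (c 2).isLeft := fun e => hA e.symm
    have h12 : (c 1).isLeft ≠ (c 2).isLeft := fun e => hA (e.symm.trans step1.symm)
    have h04 := hXY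
    obtain ⟨x02, y02, hx02s, hy02s, hx02, hy02, hb02⟩ :=
      Aux.crossWalk (p (hadj h02)) (f (c 1) : ℕ) (le_of_lt (ha (by decide))) (ha (by decide))
    obtain ⟨x04, y04, hx04s, hy04s, hx04, hy04, hb04⟩ :=
      Aux.crossWalk (p (hadj h04)) (f (c 1) : ℕ) (le_of_lt (ha (by decide))) (ha (by decide))
    obtain ⟨x05, y05, hx05s, hy05s, hx05, hy05, hb05⟩ :=
      Aux.crossWalk (p (hadj h05)) (f (c 1) : ℕ) (le_of_lt (ha (by decide))) (ha (by decide))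
    obtain ⟨x15, y15, hx15s, hy15s, hx15, hy15, hb15⟩ :=
      Aux.crossWalk (p (hadj h15)) (f (c 1) : ℕ) (le_refl _) (ha (by decide))
    have l0 : (f (c 0) : ℕ) ≤ (f (c 1) : ℕ) := le_of_lt (ha (by decide))
    have l1 : (f (c 1) : ℕ) ≤ (f (c 1) : ℕ) := le_refl _
    have d24 : (y02:ℕ) ≠ (y04:ℕ) := fun h =>
      absurd (DrightV h02 h04 _ l0 l0 hy02s hy04s hy02 h (by decide) (by decide)).1 (by decide)
    have d25 : (y02:ℕ) ≠ (y05:ℕ) := fun h =>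
      absurd (DrightV h02 h05 _ l0 l0 hy02s hy05s hy02 h (by decide) (by decide)).1 (by decide)
    have d45 : (y04:ℕ) ≠ (y05:ℕ) := fun h =>
      absurd (DrightV h04 h05 _ l0 l0 hy04s hy05s hy04 h (by decide) (by decide)).1 (by decide)
    have e5 : y15 = f (c 5) := by
      have c2 : (y15:ℕ) ≠ (y02:ℕ) := fun h =>
        absurd (DrightV h15 h02 _ l1 l0 hy15s hy02s hy15 h (by decide) (by decide)).1 (by decide)
      have c4 : (y15:ℕ) ≠ (y04:ℕ) := fun h =>
        absurd (DrightV h15 h04 _ l1 l0 hy15s hy04s hy15 h (by decide) (by decide)).1 (by decide)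
      have h1 : (y15:ℕ) = (y05:ℕ) := by omega
      exact (DrightV h15 h05 _ l1 l0 hy15s hy05s hy15 h1 (by decide) (by decide)).2
    have v5 : (f (c 5) : ℕ) = (y15:ℕ) := by rw [e5]
    have m12 : (f (c 1) : ℕ) < (f (c 2) : ℕ) := ha (by decide)
    have m23 : (f (c 2) : ℕ) < (f (c 3) : ℕ) := ha (by decide)
    have m34 : (f (c 3) : ℕ) < (f (c 4) : ℕ) := ha (by decide)
    have m45 : (f (c 4) : ℕ) < (f (c 5) : ℕ) := ha (by decide)
    omega

/-- `Pₙ³` is planar for all `n ≥ 1`. -/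
theorem stmt11 (n : ℕ) (hn : 1 ≤ n) : IsPlanar (pathPower3 n) :=
  ⟨noK5 n, noK33 n⟩
end

section
/- Let G be a graph, A ⊆ V(G), and u a vertex not in A. If there are k internally disjoint u–A paths with distinct endpoints in A (a u–A fan of size k), and (G, K') is obtained from (G, K) by adding to the clique K a vertex w adjacent to all of K with A = V(K') and k < |V(K')|, and at most one of the paths ends in w, then there is a u–V(K) fan of size k in G. -/
/-!
If no path of the fan ends at `w`, it is already a fan to `K`. Otherwise, since `k < |K| + 1`
and one endpoint is `w`, some `x ∈ K` is not an endpoint; `x` then lies on none of the paths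
(an internal vertex avoids `K`), so the path ending at `w` can be extended by the edge `wx`.
-/

open SimpleGraph

/-- `G` has a `u`–`A` fan of size `k`: `k` internally disjoint `u`–`A` paths with
pairwise distinct endpoints in `A`, whose internal vertices avoid `A`. -/
def HasFan {V : Type*} (G : SimpleGraph V) (u : V) (A : Set V) (k : ℕ) : Prop :=
  ∃ (e : Fin k → V) (p : ∀ i, G.Walk u (e i)),
    Function.Injective e ∧ (∀ i, e i ∈ A) ∧ (∀ i, (p i).IsPath) ∧
    (∀ i, ∀ x ∈ (p i).support, x ≠ u → x ≠ e i → x ∉ A) ∧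
    (∀ i j, i ≠ j → ∀ x, x ∈ (p i).support → x ∈ (p j).support → x = u)

structure IsFan {V : Type*} (G : SimpleGraph V) (u : V) (A : Set V) {k : ℕ} (e : Fin k → V)
    (p : ∀ i, G.Walk u (e i)) : Prop where
  injective : Function.Injective e
  mem : ∀ i, e i ∈ A
  isPath : ∀ i, (p i).IsPath
  notMem_of_internal : ∀ i, ∀ x ∈ (p i).support, x ≠ u → x ≠ e i → x ∉ A
  eq_of_mem_support : ∀ i j, i ≠ j → ∀ x, x ∈ (p i).support → x ∈ (p j).support → x = u

theorem Set.exists_mem_notMem_range_of_lt_ncard {V : Type*} {s : Set V} {k : ℕ}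
    {e : Fin k → V} (he : Function.Injective e) (hk : k < s.ncard) :
    ∃ x ∈ s, x ∉ Set.range e := by
  by_contra! hs
  have hle := Set.ncard_le_ncard hs (Set.finite_range e)
  rw [Set.ncard_range_of_injective he, Nat.card_eq_fintype_card, Fintype.card_fin] at hle
  omega

namespace IsFan

variable {V : Type*} {G : SimpleGraph V} {u : V} {A B : Set V} {k : ℕ} {e : Fin k → V}
  {p : ∀ i, G.Walk u (e i)}

theorem hasFan (h : IsFan G u A e p) : HasFan G u A k :=
  ⟨e, p, h.injective, h.mem, h.isPath, h.notMem_of_internal, h.eq_of_mem_support⟩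

theorem mono (h : IsFan G u B e p) (hAB : A ⊆ B) (heA : ∀ i, e i ∈ A) : IsFan G u A e p :=
  ⟨h.injective, heA, h.isPath,
    fun i x hx hxu hxe hxA => h.notMem_of_internal i x hx hxu hxe (hAB hxA), h.eq_of_mem_support⟩

theorem notMem_support (h : IsFan G u A e p) {x : V} (hxA : x ∈ A) (hxu : x ≠ u)
    (hxe : x ∉ Set.range e) (i : Fin k) : x ∉ (p i).support :=
  fun hx => h.notMem_of_internal i x hx hxu (fun hxi => hxe ⟨i, hxi.symm⟩) hxA

theorem retarget (h : IsFan G u B e p) (hAB : A ⊆ B) {e' : Fin k → V}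
    (q : ∀ i, G.Walk u (e' i)) (he' : Function.Injective e') (he'A : ∀ i, e' i ∈ A)
    (hq : ∀ i, (q i).IsPath) (hqp : ∀ i, ∀ y ∈ (q i).support, y ∈ (p i).support ∨ y = e' i)
    (hmoved : ∀ i, e' i ≠ e i → e i ∉ A ∧ ∀ j, e' i ∉ (p j).support) :
    IsFan G u A e' q := by
  have hnew : ∀ i, ∀ y ∈ (q i).support,
      y ∈ (p i).support ∨ (y = e' i ∧ ∀ j, y ∉ (p j).support) := by
    intro i y hy
    rcases hqp i y hy with hyp | rfl
    · exact Or.inl hyp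
    · by_cases hsame : e' i = e i
      · exact Or.inl (hsame.symm ▸ (p i).end_mem_support)
      · exact Or.inr ⟨rfl, (hmoved i hsame).2⟩
  refine ⟨he', he'A, hq, ?_, ?_⟩
  · intro i y hy hyu hye' hyA
    rcases hqp i y hy with hyp | rfl
    · by_cases hye : y = e i
      · subst hye
        exact (hmoved i (Ne.symm hye')).1 hyA
      · exact h.notMem_of_internal i y hyp hyu hye (hAB hyA)
    · exact hye' rfl
  · intro i j hij y hyi hyj
    rcases hnew i y hyi with hpi | ⟨rfl, hfree⟩
    · rcases hnew j y hyj with hpj | ⟨-, hfree⟩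
      · exact h.eq_of_mem_support i j hij y hpi hpj
      · exact absurd hpi (hfree i)
    · rcases hnew j _ hyj with hpj | ⟨hij', -⟩
      · exact absurd hpj (hfree j)
      · exact absurd (he' hij') hij

theorem hasFan_of_adj_of_notMem_range {w x : V} (h : IsFan G u (A ∪ {w}) e p) (hw : w ∉ A)
    (hone : {i | e i = w}.Subsingleton) (hxA : x ∈ A) (hxu : x ≠ u) (hxe : x ∉ Set.range e)
    (hwx : G.Adj w x) : HasFan G u A k := by
  classical
  have hxp := h.notMem_support (Or.inl hxA) hxu hxe
  set e' : Fin k → V := fun i => if e i = w then x else e i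
  have hq : ∀ i, ∃ q : G.Walk u (e' i), q.IsPath ∧
      ∀ y ∈ q.support, y ∈ (p i).support ∨ y = e' i := by
    intro i
    by_cases hi : e i = w
    · refine ⟨(((p i).copy rfl hi).concat hwx).copy rfl (by simp [e', hi]), ?_, ?_⟩
      · rw [Walk.isPath_copy]
        exact (by simpa using h.isPath i : ((p i).copy rfl hi).IsPath).concat
          (by simpa using hxp i) hwx
      · simp [Walk.support_concat, e', hi]
    · exact ⟨(p i).copy rfl (by simp [e', hi]), by simpa using h.isPath i,
      fun y hy => Or.inl (by simpa using hy)⟩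
  choose q hq hqp using hq
  refine (h.retarget Set.subset_union_left q ?_ ?_ hq hqp ?_).hasFan
  · intro i j hij
    by_cases hi : e i = w <;> by_cases hj : e j = w <;> simp only [e', hi, hj, if_true,
      if_false] at hij
    · exact hone hi hj
    · exact absurd ⟨j, hij.symm⟩ hxe
    · exact absurd ⟨i, hij⟩ hxe
    · exact h.injective hij
  · intro i
    by_cases hi : e i = w
    · simpa [e', hi] using hxA
    · simpa [e', hi] using (h.mem i).resolve_right hi
  · intro i hmoved
    have hi : e i = w := by
      by_contra hi
      simp [e', hi] at hmoved
    simp only [e', hi, if_true]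
    exact ⟨hw, hxp⟩

end IsFan

theorem stmt15_general {V : Type*} (G : SimpleGraph V) (K : Set V)
    (w : V) (hw : w ∉ K) (hwadj : ∀ x ∈ K, G.Adj w x)
    (u : V) (hu : u ∉ K ∪ {w}) (k : ℕ) (hk : k < (K ∪ {w} : Set V).ncard)
    (e : Fin k → V) (p : ∀ i, G.Walk u (e i))
    (he : Function.Injective e) (heA : ∀ i, e i ∈ K ∪ {w})
    (hp : ∀ i, (p i).IsPath)
    (hint : ∀ i, ∀ x ∈ (p i).support, x ≠ u → x ≠ e i → x ∉ K ∪ {w})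
    (hdisj : ∀ i j, i ≠ j → ∀ x, x ∈ (p i).support → x ∈ (p j).support → x = u)
    (hone : {i | e i = w}.Subsingleton) :
    HasFan G u K k := by
  have hfan : IsFan G u (K ∪ {w}) e p := ⟨he, heA, hp, hint, hdisj⟩
  by_cases hwe : w ∈ Set.range e
  · obtain ⟨x, hxKw, hxe⟩ := Set.exists_mem_notMem_range_of_lt_ncard he hk
    have hxK : x ∈ K := hxKw.resolve_right fun hxw => hxe (Set.mem_singleton_iff.mp hxw ▸ hwe)
    exact hfan.hasFan_of_adj_of_notMem_range hw hone hxK (fun hxu => hu (hxu ▸ Or.inl hxK)) hxe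
      (hwadj x hxK)
  · exact (hfan.mono Set.subset_union_left fun i =>
      (heA i).resolve_right fun hiw => hwe ⟨i, hiw⟩).hasFan

/-- If `K` is a clique, `w ∉ K` is adjacent to all of `K`, `u ∉ K ∪ {w}`, and there is a
`u`–`(K ∪ {w})` fan of size `k < |K ∪ {w}|` in which at most one path ends in `w`, then
`G` has a `u`–`K` fan of size `k`. -/
theorem stmt15 {V : Type*} (G : SimpleGraph V) (K : Set V) (hK : G.IsClique K)
    (w : V) (hw : w ∉ K) (hwadj : ∀ x ∈ K, G.Adj w x)
    (u : V) (hu : u ∉ K ∪ {w}) (k : ℕ) (hk : k < (K ∪ {w} : Set V).ncard)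
    (e : Fin k → V) (p : ∀ i, G.Walk u (e i))
    (he : Function.Injective e) (heA : ∀ i, e i ∈ K ∪ {w})
    (hp : ∀ i, (p i).IsPath)
    (hint : ∀ i, ∀ x ∈ (p i).support, x ≠ u → x ≠ e i → x ∉ K ∪ {w})
    (hdisj : ∀ i j, i ≠ j → ∀ x, x ∈ (p i).support → x ∈ (p j).support → x = u)
    (hone : {i | e i = w}.Subsingleton) :
    HasFan G u K k :=
  stmt15_general G K w hw hwadj u hu k hk e p he heA hp hint hdisj hone
end

section
/- P_6^3 is, up to isomorphism, the unique planar maximal 3-degenerate graph of order 6. -/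
open SimpleGraph

/-- `H` is a maximal 3-degenerate graph of order `n`: its vertices can be ordered
`v 0, …, v (n-1)` so that the first three induce a triangle and every later vertex is
adjacent to exactly 3 earlier vertices. -/
def IsMaxThreeDegenerate {V : Type*} (H : SimpleGraph V) (n : ℕ) : Prop :=
  3 ≤ n ∧ ∃ v : Fin n ≃ V,
    (∀ i j : Fin n, (i : ℕ) < 3 → (j : ℕ) < 3 → i ≠ j → H.Adj (v i) (v j)) ∧
    ∀ i : Fin n, 3 ≤ (i : ℕ) →
      Nat.card {j : Fin n // j < i ∧ H.Adj (v j) (v i)} = 3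

/-!
List a maximal 3-degenerate graph of order 6 in its degeneracy order `v₀, …, v₅`. Its only
non-edges are one pair `v_k v₄` and two pairs `v_a v₅`, `v_b v₅`. If `{v_k, v₄}` meets
`{v_a, v_b}` in exactly one vertex, the three non-edges form a path on four vertices, as do the
non-edges of `P₆³` (the path `4 0 5 1`), and graphs with isomorphic complements are isomorphic.
Otherwise every non-edge lies inside `{v₅, v_a, v_b}` or inside its complement, so the graph
contains `K₃,₃`.

`P₆³` itself is planar: a subdivision of `K₅` needs five vertices of degree at least 4 and `P₆³`
has only four, while a subdivision of `K₃,₃` on six vertices is a spanning `K₃,₃`, and no three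
vertices of `P₆³` are joined to all of the other three.
-/

open Finset

namespace SimpleGraph

variable {α β γ : Type*} {G : SimpleGraph α} {K : SimpleGraph β}

theorem Walk.adj_of_forall_mem_support {a b : α} (p : G.Walk a b) (hab : a ≠ b)
    (hs : ∀ x ∈ p.support, x = a ∨ x = b) : G.Adj a b := by
  have hsnd := p.adj_snd (Walk.not_nil_of_ne hab)
  rcases hs p.snd (p.getVert_mem_support 1) with h | h
  · exact absurd h.symm hsnd.ne
  · exact h ▸ hsnd

namespace ContainsSubdivision

protected theorem refl (K : SimpleGraph β) : K.ContainsSubdivision K := by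
  refine ⟨Function.Embedding.refl β, fun _ _ h => h.toWalk, fun _ _ h => h.isPath_toWalk,
    fun u v h x hx => ?_, fun u v u' v' h h' _ x hx hx' => ?_⟩
  · change x ∈ h.toWalk.support at hx
    simpa [h.support_toWalk] using hx
  · change x ∈ h.toWalk.support at hx
    change x ∈ h'.toWalk.support at hx'
    simp only [h.support_toWalk, h'.support_toWalk, List.mem_cons, List.not_mem_nil,
      or_false] at hx hx'
    exact ⟨hx, hx'⟩

theorem map {G' : SimpleGraph γ} (h : G.ContainsSubdivision K) (c : Copy G G') :
    G'.ContainsSubdivision K := by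
  obtain ⟨f, p, hpath, hbranch, hdisj⟩ := h
  refine ⟨f.trans c.toEmbedding, fun u v h => (p h).map c.toHom, fun u v h => ?_, ?_, ?_⟩
  · exact (hpath h).map c.injective
  · intro u v h x hx
    change _ ∈ ((p h).map c.toHom).support at hx
    rw [Walk.support_map, List.mem_map] at hx
    obtain ⟨y, hy, hyx⟩ := hx
    exact hbranch h x (c.injective hyx ▸ hy)
  · intro u v u' v' h h' hne x hx hx'
    change x ∈ ((p h).map c.toHom).support at hx
    change x ∈ ((p h').map c.toHom).support at hx'
    rw [Walk.support_map, List.mem_map] at hx hx'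
    obtain ⟨y, hy, rfl⟩ := hx
    obtain ⟨y', hy', hyy⟩ := hx'
    obtain rfl := c.injective hyy
    obtain ⟨h1, h2⟩ := hdisj h h' hne y' hy hy'
    exact ⟨h1.imp (congrArg c) (congrArg c), h2.imp (congrArg c) (congrArg c)⟩

theorem exists_equiv_of_card_eq [Fintype α] [Fintype β] (h : G.ContainsSubdivision K)
    (hc : Fintype.card β = Fintype.card α) :
    ∃ e : β ≃ α, ∀ ⦃u v : β⦄, K.Adj u v → G.Adj (e u) (e v) := by
  obtain ⟨f, p, -, hbranch, -⟩ := h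
  have hf : Function.Bijective f :=
    (Fintype.bijective_iff_injective_and_card f).2 ⟨f.injective, hc⟩
  refine ⟨Equiv.ofBijective f hf, fun u v h => ?_⟩
  refine (p h).adj_of_forall_mem_support (f.injective.ne h.ne) fun x hx => ?_
  obtain ⟨w, rfl⟩ := hf.2 x
  rcases hbranch h w hx with rfl | rfl <;> simp

theorem exists_degree_le [K.LocallyFinite] [G.LocallyFinite] (h : G.ContainsSubdivision K) :
    ∃ f : β ↪ α, ∀ u, K.degree u ≤ G.degree (f u) := by
  classical
  obtain ⟨f, p, -, -, hdisj⟩ := h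
  refine ⟨f, fun u => ?_⟩
  rw [← card_neighborFinset_eq_degree, ← card_neighborFinset_eq_degree]
  have hnil : ∀ {w} (hw : K.Adj u w), ¬ (p hw).Nil := fun hw =>
    Walk.not_nil_of_ne (f.injective.ne hw.ne)
  -- a neighbour `w` goes to the second vertex of the path for `uw`; internal disjointness of
  -- the paths makes this injective
  refine card_le_card_of_injOn (fun w => if hw : K.Adj u w then (p hw).snd else f u)
    (fun w hw => ?_) (fun w hw w' hw' hww' => ?_)
  · rw [mem_coe, mem_neighborFinset] at hw
    simpa [hw] using (p hw).adj_snd (hnil hw)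
  · rw [mem_coe, mem_neighborFinset] at hw hw'
    simp only [hw, hw', dite_true] at hww'
    by_contra hne
    have hsnd : (p hw).snd ∈ (p hw').support := by
      rw [hww']
      exact (p hw').getVert_mem_support 1
    obtain ⟨h1, h2⟩ := hdisj hw hw' (Sym2.congr_right.not.mpr hne) _
      ((p hw).getVert_mem_support 1) hsnd
    have hu : (p hw).snd ≠ f u := ((p hw).adj_snd (hnil hw)).ne.symm
    exact hne (f.injective ((h1.resolve_left hu).symm.trans (h2.resolve_left hu)))

end ContainsSubdivision

theorem Copy.containsSubdivision (c : Copy K G) : G.ContainsSubdivision K :=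
  (ContainsSubdivision.refl K).map c

variable {V W : Type*}

theorem containsSubdivision_completeBipartiteGraph {G : SimpleGraph V} {m n : ℕ}
    {A B : Finset V} (hA : #A = m) (hB : #B = n) (hAB : Disjoint A B)
    (hadj : ∀ a ∈ A, ∀ b ∈ B, G.Adj a b) :
    G.ContainsSubdivision (completeBipartiteGraph (Fin m) (Fin n)) := by
  let f : Fin m ⊕ Fin n → V :=
    Sum.elim (fun i => (A.equivFinOfCardEq hA).symm i) (fun j => (B.equivFinOfCardEq hB).symm j)
  have hf : Function.Injective f := by
    refine Function.Injective.sumElim (Subtype.val_injective.comp (Equiv.injective _))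
      (Subtype.val_injective.comp (Equiv.injective _)) fun i j h => ?_
    exact Finset.disjoint_left.mp hAB ((A.equivFinOfCardEq hA).symm i).2
      (h ▸ ((B.equivFinOfCardEq hB).symm j).2)
  refine Copy.containsSubdivision ⟨⟨f, fun {x y} h => ?_⟩, hf⟩
  rcases x with i | i <;> rcases y with j | j <;> simp at h
  · exact hadj _ (Subtype.prop _) _ (Subtype.prop _)
  · exact (hadj _ (Subtype.prop _) _ (Subtype.prop _)).symm

theorem edgeSet_eq_of_forall_lt [LinearOrder V] {G : SimpleGraph V} {S : Set (Sym2 V)}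
    (hS : ∀ z ∈ S, ¬ z.IsDiag) (h : ∀ i j, i < j → (G.Adj i j ↔ s(i, j) ∈ S)) :
    G.edgeSet = S := by
  ext z
  induction z using Sym2.ind with | _ i j => ?_
  rw [mem_edgeSet]
  rcases lt_trichotomy i j with hij | rfl | hij
  · exact h i j hij
  · exact iff_of_false (G.irrefl) fun hi => hS _ hi (Sym2.mk_isDiag_iff.2 rfl)
  · rw [adj_comm, Sym2.eq_swap, h j i hij]

theorem card_filter_not_adj_Iio {n d : ℕ} {G : SimpleGraph (Fin n)} [DecidableRel G.Adj]
    {j : Fin n} (h : Nat.card {i : Fin n // i < j ∧ G.Adj i j} = d) :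
    #{i ∈ Iio j | ¬ G.Adj i j} = j - d := by
  have hsplit := card_filter_add_card_filter_not (s := Iio j) (fun i => G.Adj i j)
  have hadj : #{i ∈ Iio j | G.Adj i j} = d := by
    rw [← h, Nat.card_eq_fintype_card, Fintype.card_subtype]
    congr 1
    ext i
    simp
  rw [Fin.card_Iio] at hsplit
  omega

def Iso.ofComplEdgeSet {G : SimpleGraph V} {H : SimpleGraph W} (e : W ≃ V)
    (h : Sym2.map e '' Hᶜ.edgeSet = Gᶜ.edgeSet) : H ≃g G where
  toEquiv := e
  map_rel_iff' {i j} := by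
    by_cases hij : i = j
    · subst hij; simp
    have hcompl : Gᶜ.Adj (e i) (e j) ↔ Hᶜ.Adj i j := by
      rw [← mem_edgeSet, ← h, ← Sym2.map_mk, (Sym2.map.injective e.injective).mem_set_image,
        mem_edgeSet]
    simpa [compl_adj, hij, e.injective.ne hij] using hcompl.not

end SimpleGraph

instance (n : ℕ) : DecidableRel (pathPower3 n).Adj :=
  inferInstanceAs (DecidableRel (fromRel _).Adj)

theorem isMaxThreeDegenerate_pathPower3_six : IsMaxThreeDegenerate (pathPower3 6) 6 := by
  refine ⟨by norm_num, Equiv.refl _, by decide, fun i hi => ?_⟩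
  rw [Nat.card_eq_fintype_card]
  revert i
  decide

theorem compl_edgeSet_pathPower3_six :
    (pathPower3 6)ᶜ.edgeSet = {s(4, 0), s(0, 5), s(5, 1)} := by
  have h : ∀ i j : Fin 6, (pathPower3 6)ᶜ.Adj i j ↔
      s(i, j) ∈ ({s(4, 0), s(0, 5), s(5, 1)} : Finset (Sym2 (Fin 6))) := by
    decide
  ext e
  induction e using Sym2.ind with | _ i j => simpa using h i j

theorem pathPower3_six_not_containsSubdivision_completeGraph :
    ¬ (pathPower3 6).ContainsSubdivision (completeGraph (Fin 5)) := by
  intro h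
  obtain ⟨f, hf⟩ := h.exists_degree_le
  have hsub : univ.map f ⊆ ({i | 4 ≤ (pathPower3 6).degree i} : Finset (Fin 6)) := by
    intro x hx
    obtain ⟨u, -, rfl⟩ := mem_map.1 hx
    simpa [complete_graph_degree] using hf u
  have hcard : #{i | 4 ≤ (pathPower3 6).degree i} = 4 := by decide
  simpa [hcard] using card_le_card hsub

theorem pathPower3_six_not_containsSubdivision_completeBipartiteGraph :
    ¬ (pathPower3 6).ContainsSubdivision (completeBipartiteGraph (Fin 3) (Fin 3)) := by
  intro h
  obtain ⟨e, he⟩ := h.exists_equiv_of_card_eq (by simp)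
  have hsplit :
      ¬ ∃ A : Finset (Fin 6), #A = 3 ∧ ∀ x ∈ A, ∀ y ∉ A, (pathPower3 6).Adj x y := by
    decide
  refine hsplit ⟨univ.map (Function.Embedding.inl.trans e.toEmbedding), by simp, ?_⟩
  intro x hx y hy
  obtain ⟨i, -, rfl⟩ := mem_map.1 hx
  obtain ⟨j | j, rfl⟩ := e.surjective y
  · exact absurd (mem_map.2 ⟨j, mem_univ _, rfl⟩) hy
  · exact he (by simp)

theorem isPlanar_pathPower3_six : IsPlanar (pathPower3 6) :=
  ⟨pathPower3_six_not_containsSubdivision_completeGraph,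
    pathPower3_six_not_containsSubdivision_completeBipartiteGraph⟩

section Classification

variable {V : Type*}

theorem nonempty_iso_pathPower3_six_of_compl_edgeSet [Fintype V] (hV : Fintype.card V = 6)
    {G : SimpleGraph V} {a b c d : V} (hac : a ≠ c) (had : a ≠ d) (hbd : b ≠ d)
    (hG : Gᶜ.edgeSet = {s(a, b), s(b, c), s(c, d)}) : Nonempty (G ≃g pathPower3 6) := by
  classical
  have hne : ∀ u w, s(u, w) ∈ ({s(a, b), s(b, c), s(c, d)} : Set (Sym2 V)) → u ≠ w :=
    fun u w h => Gᶜ.ne_of_adj (hG ▸ h : s(u, w) ∈ Gᶜ.edgeSet)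
  have hab := hne a b (by simp)
  have hbc := hne b c (by simp)
  have hcd := hne c d (by simp)
  -- only the values of `![b, d, b, b, a, c]` at `4, 0, 5, 1` are prescribed
  obtain ⟨e, he⟩ := Finset.exists_equiv_extend_of_card_eq (t := univ) (by simp [hV])
    (s := {4, 0, 5, 1}) (f := ![b, d, b, b, a, c]) (subset_univ _) (by
      intro i hi j hj hij
      simp only [coe_insert, coe_singleton, Set.mem_insert_iff, Set.mem_singleton_iff] at hi hj
      rcases hi with rfl | rfl | rfl | rfl <;> rcases hj with rfl | rfl | rfl | rfl <;>
        simp_all [eq_comm])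
  let e' : Fin 6 ≃ V := e.trans (Equiv.subtypeUnivEquiv mem_univ)
  have he' : ∀ i ∈ ({4, 0, 5, 1} : Finset (Fin 6)), e' i = ![b, d, b, b, a, c] i := he
  refine ⟨(Iso.ofComplEdgeSet e' ?_).symm⟩
  rw [compl_edgeSet_pathPower3_six, hG]
  simp [Set.image_insert_eq, he']

theorem nonempty_iso_pathPower3_six_or_containsSubdivision [Fintype V] [DecidableEq V]
    (hV : Fintype.card V = 6) {G : SimpleGraph V} {p q r x y : V}
    (hpr : p ≠ r) (hqr : q ≠ r) (hxy : x ≠ y)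
    (hG : Gᶜ.edgeSet = {s(p, q), s(r, x), s(r, y)}) :
    Nonempty (G ≃g pathPower3 6) ∨
      G.ContainsSubdivision (completeBipartiteGraph (Fin 3) (Fin 3)) := by
  have hne : ∀ u w, s(u, w) ∈ ({s(p, q), s(r, x), s(r, y)} : Set (Sym2 V)) → u ≠ w :=
    fun u w h => Gᶜ.ne_of_adj (hG ▸ h : s(u, w) ∈ Gᶜ.edgeSet)
  have hrx := hne r x (by simp)
  have hry := hne r y (by simp)
  by_cases hshare : (p = x ∨ p = y) ↔ (q = x ∨ q = y)
  · -- every non-edge lies inside `{r, x, y}` or inside its complement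
    right
    refine containsSubdivision_completeBipartiteGraph (A := {r, x, y}) (B := {r, x, y}ᶜ)
      (by simp [hrx, hry, hxy]) (by simp [card_compl, hV, hrx, hry, hxy]) disjoint_compl_right
      fun u hu w hw => ?_
    by_contra hadj
    have hnon : s(u, w) ∈ Gᶜ.edgeSet := by
      rw [mem_edgeSet, compl_adj]
      exact ⟨by rintro rfl; exact mem_compl.1 hw hu, hadj⟩
    rw [hG] at hnon
    simp only [mem_compl, mem_insert, mem_singleton] at hu hw
    simp only [Set.mem_insert_iff, Set.mem_singleton_iff, Sym2.eq_iff] at hnon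
    grind
  · -- the non-edges form a path on four vertices
    left
    by_cases hp : p = x ∨ p = y
    · have hq : q ≠ x ∧ q ≠ y := by tauto
      rcases hp with rfl | rfl
      · exact nonempty_iso_pathPower3_six_of_compl_edgeSet hV hqr hq.2 hxy
          (by rw [hG]; ext; simp [Sym2.eq_swap])
      · exact nonempty_iso_pathPower3_six_of_compl_edgeSet hV hqr hq.1 hxy.symm
          (by rw [hG]; ext; simp [Sym2.eq_swap]; tauto)
    · have hq : q = x ∨ q = y := by tauto
      rcases hq with rfl | rfl
      · exact nonempty_iso_pathPower3_six_of_compl_edgeSet hV hpr (by tauto) hxy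
          (by rw [hG]; ext; simp [Sym2.eq_swap])
      · exact nonempty_iso_pathPower3_six_of_compl_edgeSet hV hpr (by tauto) hxy.symm
          (by rw [hG]; ext; simp [Sym2.eq_swap]; tauto)

theorem exists_compl_edgeSet_eq_of_degenerate_order {G : SimpleGraph (Fin 6)}
    (htri : ∀ i j : Fin 6, (i : ℕ) < 3 → (j : ℕ) < 3 → i ≠ j → G.Adj i j)
    (hdeg : ∀ i : Fin 6, 3 ≤ (i : ℕ) → Nat.card {j : Fin 6 // j < i ∧ G.Adj j i} = 3) :
    ∃ k a b : Fin 6, k ≠ 5 ∧ a ≠ b ∧ Gᶜ.edgeSet = {s(k, 4), s(5, a), s(5, b)} := by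
  classical
  set miss : Fin 6 → Finset (Fin 6) := fun j => {i ∈ Iio j | ¬ G.Adj i j}
  have hlt3 : ∀ j : Fin 6, (j : ℕ) < 3 → miss j = ∅ := fun j hj =>
    filter_eq_empty_iff.2 fun i hi hn =>
      hn (htri i j ((Fin.lt_def.1 (mem_Iio.1 hi)).trans hj) hj (mem_Iio.1 hi).ne)
  have h3 : miss 3 = ∅ := card_eq_zero.1 (card_filter_not_adj_Iio (hdeg 3 (by decide)))
  obtain ⟨k, hk⟩ : ∃ k, miss 4 = {k} :=
    card_eq_one.1 (card_filter_not_adj_Iio (hdeg 4 (by decide)))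
  obtain ⟨a, b, hab, hab'⟩ : ∃ a b, a ≠ b ∧ miss 5 = {a, b} :=
    card_eq_two.1 (card_filter_not_adj_Iio (hdeg 5 (by decide)))
  have hk4 : k < 4 := mem_Iio.1 (mem_filter.1 (hk ▸ mem_singleton_self k : k ∈ miss 4)).1
  have ha5 : a < 5 := mem_Iio.1 (mem_filter.1 (hab' ▸ by simp : a ∈ miss 5)).1
  have hb5 : b < 5 := mem_Iio.1 (mem_filter.1 (hab' ▸ by simp : b ∈ miss 5)).1
  refine ⟨k, a, b, by grind, hab, Gᶜ.edgeSet_eq_of_forall_lt ?_ fun i j hij => ?_⟩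
  · simp only [Set.mem_insert_iff, Set.mem_singleton_iff]
    grind [Sym2.mk_isDiag_iff]
  · have hmiss : Gᶜ.Adj i j ↔ i ∈ miss j := by simp [miss, compl_adj, hij, hij.ne]
    rw [hmiss]
    fin_cases j <;> simp [hlt3, h3, hk, hab'] at hij ⊢ <;> grind

end Classification

/-- `P₆³` is, up to isomorphism, the unique planar maximal 3-degenerate graph of
order 6. -/
theorem stmt17 {V : Type*} (H : SimpleGraph V)
    (hH : IsMaxThreeDegenerate H 6) (hp : IsPlanar H) :
    IsMaxThreeDegenerate (pathPower3 6) 6 ∧ IsPlanar (pathPower3 6) ∧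
    Nonempty (H ≃g pathPower3 6) := by
  refine ⟨isMaxThreeDegenerate_pathPower3_six, isPlanar_pathPower3_six, ?_⟩
  obtain ⟨-, v, htri, hdeg⟩ := hH
  obtain ⟨k, a, b, hk, hab, hG⟩ :=
    exists_compl_edgeSet_eq_of_degenerate_order (G := H.comap v) htri hdeg
  rcases nonempty_iso_pathPower3_six_or_containsSubdivision (by simp) hk (by decide) hab hG
    with ⟨⟨e⟩⟩ | hK
  · exact ⟨(Iso.comap v H).symm.trans e⟩
  · exact absurd (hK.map (Iso.comap v H).toCopy) hp.2
end
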